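/- arXiv:2403.12626 — 7 statements merged into one kernel-verified Lean document; each statement's English description precedes it below -/
import Mathlib

section
/- (Unit representatives of the coordinate fields commute iff the metric is Chebyshev in each family parameter.) Let a, b : ℝ² → ℝ be C^∞ and strictly positive on an open connected set U ⊆ ℝ². Define the vector fields X̂₁(u) = a(u)^{-1/2}·e₁ and X̂₂(u) = b(u)^{-1/2}·e₂ on U, where e₁, e₂ is the standard basis of ℝ². Then the Lie bracket [X̂₁, X̂₂] vanishes identically on U if and only if ∂a/∂y = 0 and ∂b/∂x = 0 identically on U. -/
/-- The Lie bracket of two vector fields on (an open subset of) `ℝ²`: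
`[X,Y](u) = (DY)(u)(X(u)) − (DX)(u)(Y(u))`. -/
noncomputable def lieBracketVF (X Y : ℝ × ℝ → ℝ × ℝ) (u : ℝ × ℝ) : ℝ × ℝ :=
  fderiv ℝ Y u (X u) - fderiv ℝ X u (Y u)

lemma invSqrt_hasFDerivAt {a : ℝ × ℝ → ℝ} {u : ℝ × ℝ}
    (h : DifferentiableAt ℝ a u) (hpos : 0 < a u) :
    HasFDerivAt (fun v => (Real.sqrt (a v))⁻¹)
      ((-(2 * a u * Real.sqrt (a u))⁻¹) • fderiv ℝ a u) u := by
  have hsq : Real.sqrt (a u) ≠ 0 := by positivity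
  have h1 : HasDerivAt (fun x => (Real.sqrt x)⁻¹)
      (-(1/(2*Real.sqrt (a u))) / Real.sqrt (a u) ^ 2) (a u) :=
    (Real.hasDerivAt_sqrt hpos.ne').inv hsq
  have h2 := h1.comp_hasFDerivAt u h.hasFDerivAt
  refine h2.congr_fderiv (congrArg (· • fderiv ℝ a u) ?_)
  have hs : Real.sqrt (a u) ^ 2 = a u := Real.sq_sqrt hpos.le
  rw [hs]
  field_simp


/-- **Unit representatives of the coordinate fields commute iff the metric is Chebyshev
in each family parameter.** For positive smooth `a, b` on an open connected `U ⊆ ℝ²`, the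
unit fields `X̂₁ = a^{-1/2}·e₁`, `X̂₂ = b^{-1/2}·e₂` have vanishing Lie bracket on `U`
iff `∂a/∂y = 0` and `∂b/∂x = 0` on `U`. -/
theorem unit_representatives_commute_iff_chebyshev
    (U : Set (ℝ × ℝ)) (hU : IsOpen U) (hUconn : IsConnected U)
    (a b : ℝ × ℝ → ℝ)
    (ha : ContDiffOn ℝ (⊤ : ℕ∞) a U) (hb : ContDiffOn ℝ (⊤ : ℕ∞) b U)
    (hapos : ∀ u ∈ U, 0 < a u) (hbpos : ∀ u ∈ U, 0 < b u) :
    (∀ u ∈ U,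
        lieBracketVF (fun v => ((Real.sqrt (a v))⁻¹, 0))
          (fun v => (0, (Real.sqrt (b v))⁻¹)) u = 0)
      ↔ (∀ u ∈ U, fderiv ℝ a u (0, 1) = 0 ∧ fderiv ℝ b u (1, 0) = 0) := by
  have key : ∀ u ∈ U,
      lieBracketVF (fun v => ((Real.sqrt (a v))⁻¹, 0))
          (fun v => (0, (Real.sqrt (b v))⁻¹)) u =
        (-((-(2 * a u * Real.sqrt (a u))⁻¹) * ((Real.sqrt (b u))⁻¹ * fderiv ℝ a u (0, 1))),
         (-(2 * b u * Real.sqrt (b u))⁻¹) * ((Real.sqrt (a u))⁻¹ * fderiv ℝ b u (1, 0))) := by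
    intro u hu
    have hu' := hU.mem_nhds hu
    have ha' : DifferentiableAt ℝ a u := (ha.contDiffAt hu').differentiableAt (by simp)
    have hb' : DifferentiableAt ℝ b u := (hb.contDiffAt hu').differentiableAt (by simp)
    have hA := invSqrt_hasFDerivAt ha' (hapos u hu)
    have hB := invSqrt_hasFDerivAt hb' (hbpos u hu)
    have hX1 : HasFDerivAt (fun v => ((Real.sqrt (a v))⁻¹, (0 : ℝ)))
        (((-(2 * a u * Real.sqrt (a u))⁻¹) • fderiv ℝ a u).prod 0) u :=
      HasFDerivAt.prodMk hA (hasFDerivAt_const (0 : ℝ) u)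
    have hX2 : HasFDerivAt (fun v => ((0 : ℝ), (Real.sqrt (b v))⁻¹))
        ((0 : (ℝ × ℝ) →L[ℝ] ℝ).prod ((-(2 * b u * Real.sqrt (b u))⁻¹) • fderiv ℝ b u)) u :=
      HasFDerivAt.prodMk (hasFDerivAt_const (0 : ℝ) u) hB
    have e1 : ((0 : ℝ), (Real.sqrt (b u))⁻¹) = (Real.sqrt (b u))⁻¹ • ((0 : ℝ), (1 : ℝ)) := by
      simp
    have e2 : ((Real.sqrt (a u))⁻¹, (0 : ℝ)) = (Real.sqrt (a u))⁻¹ • ((1 : ℝ), (0 : ℝ)) := by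
      simp
    rw [lieBracketVF, hX2.fderiv, hX1.fderiv]
    rw [ContinuousLinearMap.prod_apply, ContinuousLinearMap.prod_apply]
    rw [e1, e2, map_smul, map_smul, map_smul, map_smul]
    simp [Prod.ext_iff, mul_comm]
    ring_nf
    exact ⟨trivial, trivial⟩
  constructor
  · intro H u hu
    have h0 := (key u hu).symm.trans (H u hu)
    rw [Prod.ext_iff] at h0
    have hsa : Real.sqrt (a u) ≠ 0 := by have := hapos u hu; positivity
    have hsb : Real.sqrt (b u) ≠ 0 := by have := hbpos u hu; positivity
    have hca : (-(2 * a u * Real.sqrt (a u))⁻¹) ≠ 0 := by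
      have := hapos u hu
      exact neg_ne_zero.mpr (inv_ne_zero (by positivity))
    have hcb : (-(2 * b u * Real.sqrt (b u))⁻¹) ≠ 0 := by
      have := hbpos u hu
      exact neg_ne_zero.mpr (inv_ne_zero (by positivity))
    obtain ⟨h1, h2⟩ := h0
    constructor
    · have h1' := neg_eq_zero.mp h1
      exact (mul_eq_zero.mp ((mul_eq_zero.mp h1').resolve_left hca)).resolve_left
        (inv_ne_zero hsb)
    · exact (mul_eq_zero.mp ((mul_eq_zero.mp h2).resolve_left hcb)).resolve_left
        (inv_ne_zero hsa)
  · intro H u hu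
    rw [key u hu, (H u hu).1, (H u hu).2]
    simp
end

section
/- (Relation between the Bortolotti invariants π and the commutator invariants ι.) Let r : ℝ² → ℝ³ be C^∞ on an open set U ⊆ ℝ² with I₁₁ > 0, I₂₂ > 0 and Δ := I₁₁I₂₂ − I₁₂² > 0 on U, where Iᵢⱼ are the first fundamental coefficients of r. Define Γ¹₁₂ := (I₂₂(r_x·r_xy) − I₁₂(r_y·r_xy))/Δ, Γ²₂₁ := (I₁₁(r_y·r_xy) − I₁₂(r_x·r_xy))/Δ, π₁ := Γ¹₁₂/√I₂₂, π₂ := Γ²₂₁/√I₁₁, ι₁ := (∂I₁₁/∂y)/(2 I₁₁ √I₂₂), ι₂ := −(∂I₂₂/∂x)/(2 I₂₂ √I₁₁), and cos ω := I₁₂/√(I₁₁I₂₂). Then on U: π₁ + π₂ cos ω = ι₁ and π₁ cos ω + π₂ = −ι₂. In particular π₁ = π₂ = 0 iff ι₁ = ι₂ = 0 (equivalence (iv) ⇔ (v) for Chebyshev nets). -/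
open scoped Matrix

noncomputable def Dx {E : Type*} [NormedAddCommGroup E] [NormedSpace ℝ E]
    (f : ℝ × ℝ → E) (p : ℝ × ℝ) : E := fderiv ℝ f p (1, 0)

noncomputable def Dy {E : Type*} [NormedAddCommGroup E] [NormedSpace ℝ E]
    (f : ℝ × ℝ → E) (p : ℝ × ℝ) : E := fderiv ℝ f p (0, 1)

/-- First fundamental coefficients of a parameterised surface `r : ℝ² → ℝ³`. -/
noncomputable def I11 (r : ℝ × ℝ → Fin 3 → ℝ) (p : ℝ × ℝ) : ℝ := Dx r p ⬝ᵥ Dx r p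
noncomputable def I12 (r : ℝ × ℝ → Fin 3 → ℝ) (p : ℝ × ℝ) : ℝ := Dx r p ⬝ᵥ Dy r p
noncomputable def I22 (r : ℝ × ℝ → Fin 3 → ℝ) (p : ℝ × ℝ) : ℝ := Dy r p ⬝ᵥ Dy r p
noncomputable def Δdet (r : ℝ × ℝ → Fin 3 → ℝ) (p : ℝ × ℝ) : ℝ :=
  I11 r p * I22 r p - (I12 r p) ^ 2

/-- The Christoffel-type semiinvariant `Γ¹₁₂`. -/
noncomputable def Γ112 (r : ℝ × ℝ → Fin 3 → ℝ) (p : ℝ × ℝ) : ℝ :=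
  (I22 r p * (Dx r p ⬝ᵥ Dy (Dx r) p) - I12 r p * (Dy r p ⬝ᵥ Dy (Dx r) p)) / Δdet r p

/-- The Christoffel-type semiinvariant `Γ²₂₁`. -/
noncomputable def Γ221 (r : ℝ × ℝ → Fin 3 → ℝ) (p : ℝ × ℝ) : ℝ :=
  (I11 r p * (Dy r p ⬝ᵥ Dy (Dx r) p) - I12 r p * (Dx r p ⬝ᵥ Dy (Dx r) p)) / Δdet r p

/-- The Bortolotti invariants `π₁`, `π₂`. -/
noncomputable def π1 (r : ℝ × ℝ → Fin 3 → ℝ) (p : ℝ × ℝ) : ℝ :=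
  Γ112 r p / Real.sqrt (I22 r p)
noncomputable def π2 (r : ℝ × ℝ → Fin 3 → ℝ) (p : ℝ × ℝ) : ℝ :=
  Γ221 r p / Real.sqrt (I11 r p)

/-- The commutator invariants `ι₁`, `ι₂`. -/
noncomputable def ι1 (r : ℝ × ℝ → Fin 3 → ℝ) (p : ℝ × ℝ) : ℝ :=
  Dy (I11 r) p / (2 * I11 r p * Real.sqrt (I22 r p))
noncomputable def ι2 (r : ℝ × ℝ → Fin 3 → ℝ) (p : ℝ × ℝ) : ℝ :=
  -(Dx (I22 r) p / (2 * I22 r p * Real.sqrt (I11 r p)))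

/-- Cosine of the intersection angle of the coordinate net. -/
noncomputable def cosω (r : ℝ × ℝ → Fin 3 → ℝ) (p : ℝ × ℝ) : ℝ :=
  I12 r p / Real.sqrt (I11 r p * I22 r p)

lemma fderiv_dot_self (g : ℝ × ℝ → Fin 3 → ℝ) (p : ℝ × ℝ) (w : ℝ × ℝ)
    (hg : DifferentiableAt ℝ g p) :
    fderiv ℝ (fun q => g q ⬝ᵥ g q) p w = 2 * (g p ⬝ᵥ fderiv ℝ g p w) := by
  have H : HasFDerivAt g (fderiv ℝ g p) p := hg.hasFDerivAt
  have hcomp : ∀ i : Fin 3, HasFDerivAt (fun q => g q i)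
      ((ContinuousLinearMap.proj i).comp (fderiv ℝ g p)) p := fun i => by
    exact (ContinuousLinearMap.proj i).hasFDerivAt.comp p H
  have hsum : HasFDerivAt (fun q => ∑ i : Fin 3, g q i * g q i)
      (∑ i : Fin 3, (g p i • (ContinuousLinearMap.proj i).comp (fderiv ℝ g p)
        + g p i • (ContinuousLinearMap.proj i).comp (fderiv ℝ g p))) p :=
    HasFDerivAt.fun_sum fun i _ => (hcomp i).mul (hcomp i)
  have e : (fun q => g q ⬝ᵥ g q) = fun q => ∑ i : Fin 3, g q i * g q i := by
    funext q; simp [dotProduct]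
  rw [e, hsum.fderiv]
  simp [dotProduct, Finset.mul_sum, mul_comm, two_mul, Finset.sum_add_distrib]

lemma clairaut (r : ℝ × ℝ → Fin 3 → ℝ) (p : ℝ × ℝ) (h : ContDiffAt ℝ (⊤ : ℕ∞) r p) :
    Dx (Dy r) p = Dy (Dx r) p := by
  have hf : ContDiffAt ℝ (⊤ : ℕ∞) (fderiv ℝ r) p := h.fderiv_right (by simp)
  have hd : DifferentiableAt ℝ (fderiv ℝ r) p := hf.differentiableAt (by simp)
  have hsymm : IsSymmSndFDerivAt ℝ r p := h.isSymmSndFDerivAt (by rw [minSmoothness_of_isRCLikeNormedField]; exact WithTop.coe_le_coe.2 le_top)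
  have e1 : ∀ v w : ℝ × ℝ, fderiv ℝ (fun q => fderiv ℝ r q v) p w
      = fderiv ℝ (fderiv ℝ r) p w v := by
    intro v w
    rw [fderiv_clm_apply hd (differentiableAt_const v)]
    simp
  show fderiv ℝ (fun q => fderiv ℝ r q (0,1)) p (1,0)
     = fderiv ℝ (fun q => fderiv ℝ r q (1,0)) p (0,1)
  rw [e1, e1, hsymm]

/-- **Relation between the Bortolotti invariants `π` and the commutator invariants `ι`:**
`π₁ + π₂ cos ω = ι₁` and `π₁ cos ω + π₂ = −ι₂` on `U`; in particular `π₁ = π₂ = 0`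
iff `ι₁ = ι₂ = 0`. -/
theorem bortolotti_iota_relations
    (U : Set (ℝ × ℝ)) (hU : IsOpen U)
    (r : ℝ × ℝ → Fin 3 → ℝ) (hr : ContDiffOn ℝ (⊤ : ℕ∞) r U)
    (h11 : ∀ p ∈ U, 0 < I11 r p) (h22 : ∀ p ∈ U, 0 < I22 r p)
    (hΔ : ∀ p ∈ U, 0 < Δdet r p) :
    (∀ p ∈ U, π1 r p + π2 r p * cosω r p = ι1 r p
        ∧ π1 r p * cosω r p + π2 r p = -ι2 r p)
    ∧ (∀ p ∈ U, (π1 r p = 0 ∧ π2 r p = 0) ↔ (ι1 r p = 0 ∧ ι2 r p = 0)) := by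
  have key : ∀ p ∈ U, π1 r p + π2 r p * cosω r p = ι1 r p
      ∧ π1 r p * cosω r p + π2 r p = -ι2 r p := by
    intro p hp
    have hE := h11 p hp
    have hG := h22 p hp
    have hD := hΔ p hp
    have hct : ContDiffAt ℝ (⊤ : ℕ∞) r p := hr.contDiffAt (hU.mem_nhds hp)
    have hf : ContDiffAt ℝ (⊤ : ℕ∞) (fderiv ℝ r) p := hct.fderiv_right (by simp)
    have hDx : DifferentiableAt ℝ (Dx r) p :=
      (hf.clm_apply contDiffAt_const).differentiableAt (by simp)
    have hDy : DifferentiableAt ℝ (Dy r) p :=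
      (hf.clm_apply contDiffAt_const).differentiableAt (by simp)
    have hI11 : Dy (I11 r) p = 2 * (Dx r p ⬝ᵥ Dy (Dx r) p) := by
      show fderiv ℝ (fun q => Dx r q ⬝ᵥ Dx r q) p (0,1) = _
      rw [fderiv_dot_self (Dx r) p (0,1) hDx]; rfl
    have hI22 : Dx (I22 r) p = 2 * (Dy r p ⬝ᵥ Dy (Dx r) p) := by
      have : Dx (I22 r) p = 2 * (Dy r p ⬝ᵥ Dx (Dy r) p) := by
        show fderiv ℝ (fun q => Dy r q ⬝ᵥ Dy r q) p (1,0) = _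
        rw [fderiv_dot_self (Dy r) p (1,0) hDy]; rfl
      rw [this, clairaut r p hct]
    -- algebra
    set a := Dx r p ⬝ᵥ Dy (Dx r) p with ha
    set b := Dy r p ⬝ᵥ Dy (Dx r) p with hb
    set E := I11 r p with hEdef
    set G := I22 r p with hGdef
    set F := I12 r p with hFdef
    have hs1 : Real.sqrt E ^ 2 = E := Real.sq_sqrt hE.le
    have hs2 : Real.sqrt G ^ 2 = G := Real.sq_sqrt hG.le
    have hs1p : 0 < Real.sqrt E := Real.sqrt_pos.2 hE
    have hs2p : 0 < Real.sqrt G := Real.sqrt_pos.2 hG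
    have hsEG : Real.sqrt (E * G) = Real.sqrt E * Real.sqrt G := Real.sqrt_mul hE.le _
    set s1 := Real.sqrt E with hs1def
    set s2 := Real.sqrt G with hs2def
    have hDne : s1 ^ 2 * s2 ^ 2 - F ^ 2 ≠ 0 := by
      rw [hs1, hs2]
      have : Δdet r p = E * G - F ^ 2 := rfl
      rw [this] at hD; linarith
    unfold π1 π2 ι1 ι2 cosω Γ112 Γ221 Δdet
    rw [hI11, hI22, ← ha, ← hb, ← hEdef, ← hGdef, ← hFdef, hsEG, ← hs1, ← hs2]
    simp only [Real.sqrt_sq hs1p.le, Real.sqrt_sq hs2p.le]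
    have hDne' : s2 ^ 2 * s1 ^ 2 - F ^ 2 ≠ 0 := by rw [mul_comm]; exact hDne
    constructor
    · field_simp
      ring
    · field_simp
      ring
  refine ⟨key, fun p hp => ?_⟩
  obtain ⟨e1, e2⟩ := key p hp
  constructor
  · rintro ⟨h1, h2⟩
    rw [h1, h2] at e1 e2
    constructor
    · linarith
    · linarith
  · rintro ⟨h1, h2⟩
    rw [h1] at e1; rw [h2] at e2
    have hc2 : (cosω r p) ^ 2 < 1 := by
      have hE := h11 p hp
      have hG := h22 p hp
      have hD := hΔ p hp
      have hDd : Δdet r p = I11 r p * I22 r p - (I12 r p) ^ 2 := rfl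
      have : (cosω r p) ^ 2 = (I12 r p) ^ 2 / (I11 r p * I22 r p) := by
        unfold cosω
        rw [div_pow, Real.sq_sqrt (by positivity)]
      rw [this, div_lt_one (by positivity)]
      nlinarith
    have hpi1 : π1 r p = 0 := by
      have h0 : π1 r p * (1 - cosω r p ^ 2) = 0 := by
        have := e2
        simp only [neg_zero] at this
        linear_combination e1 - cosω r p * this
      rcases mul_eq_zero.1 h0 with h | h
      · exact h
      · nlinarith
    have hpi2 : π2 r p = 0 := by
      have := e2
      simp only [neg_zero] at this
      rw [hpi1] at this
      linarith
    exact ⟨hpi1, hpi2⟩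
end

section
/- (Vector conservation law for linear relations between the Gauss and Schief curvatures.) In the Chebyshev setting, assume h₁₁h₂₂ − h₁₂² + κh₁₂ + λ = 0 on U for real constants κ, λ. Set P := (h₁₂ − κ) r_x − h₁₁ r_y and Q := h₂₂ r_x + (κ − h₁₂) r_y. Then ∂P/∂y − ∂Q/∂x = 2λ sin ω · n holds on U. In particular, since sin ω > 0 and n ≠ 0 on U, the pair (P, Q) satisfies the conservation law ∂P/∂y = ∂Q/∂x on U if and only if λ = 0. -/
open scoped Matrix

/-- The unit normal `n = (r_x × r_y)/sin ω` of a Chebyshev parameterisation. -/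
noncomputable def nvec (r : ℝ × ℝ → Fin 3 → ℝ) (ω : ℝ × ℝ → ℝ) (p : ℝ × ℝ) : Fin 3 → ℝ :=
  (Real.sin (ω p))⁻¹ • (Dx r p ⨯₃ Dy r p)

/-- `h₁₁ = (r_xx·n)/sin ω`. -/
noncomputable def h11 (r : ℝ × ℝ → Fin 3 → ℝ) (ω : ℝ × ℝ → ℝ) (p : ℝ × ℝ) : ℝ :=
  (Dx (Dx r) p ⬝ᵥ nvec r ω p) / Real.sin (ω p)

/-- `h₁₂ = (r_xy·n)/sin ω`. -/
noncomputable def h12 (r : ℝ × ℝ → Fin 3 → ℝ) (ω : ℝ × ℝ → ℝ) (p : ℝ × ℝ) : ℝ :=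
  (Dy (Dx r) p ⬝ᵥ nvec r ω p) / Real.sin (ω p)

/-- `h₂₂ = (r_yy·n)/sin ω`. -/
noncomputable def h22 (r : ℝ × ℝ → Fin 3 → ℝ) (ω : ℝ × ℝ → ℝ) (p : ℝ × ℝ) : ℝ :=
  (Dy (Dy r) p ⬝ᵥ nvec r ω p) / Real.sin (ω p)

/-! ### Auxiliary pure vector-algebra lemmas -/

section VectorAlgebra

private lemma gram_expand (u v z : Fin 3 → ℝ) :
    ((u ⬝ᵥ u) * (v ⬝ᵥ v) - (u ⬝ᵥ v)^2) • z
      = ((v ⬝ᵥ v) * (z ⬝ᵥ u) - (u ⬝ᵥ v) * (z ⬝ᵥ v)) • u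
        + ((u ⬝ᵥ u) * (z ⬝ᵥ v) - (u ⬝ᵥ v) * (z ⬝ᵥ u)) • v
        + (z ⬝ᵥ (u ⨯₃ v)) • (u ⨯₃ v) := by
  funext i; fin_cases i <;>
    simp [cross_apply, dotProduct, Fin.sum_univ_three] <;> ring

private lemma crossXY_combo (u v : Fin 3 → ℝ) (a1 a2 : ℝ) :
    (u ⨯₃ v) ⨯₃ (a1 • u + a2 • v)
      = (a1 * (u ⬝ᵥ u) + a2 * (u ⬝ᵥ v)) • v - (a1 * (u ⬝ᵥ v) + a2 * (v ⬝ᵥ v)) • u := by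
  funext i; fin_cases i <;>
    simp [cross_apply, dotProduct, Fin.sum_univ_three] <;> ring

private lemma cross_combo (u v : Fin 3 → ℝ) (b1 b2 a1 a2 : ℝ) :
    (b1 • u + b2 • v) ⨯₃ (a1 • u + a2 • v) = (b1 * a2 - b2 * a1) • (u ⨯₃ v) := by
  funext i; fin_cases i <;>
    simp [cross_apply, dotProduct, Fin.sum_univ_three] <;> ring

private lemma cross_norm_sq (u v : Fin 3 → ℝ) :
    (u ⨯₃ v) ⬝ᵥ (u ⨯₃ v) = (u ⬝ᵥ u) * (v ⬝ᵥ v) - (u ⬝ᵥ v)^2 := by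
  simp [cross_apply, dotProduct, Fin.sum_univ_three]; ring

private lemma cross_dot_fst3 (u v : Fin 3 → ℝ) : (u ⨯₃ v) ⬝ᵥ u = 0 := by
  simp [cross_apply, dotProduct, Fin.sum_univ_three]; ring

private lemma cross_dot_snd3 (u v : Fin 3 → ℝ) : (u ⨯₃ v) ⬝ᵥ v = 0 := by
  simp [cross_apply, dotProduct, Fin.sum_univ_three]; ring

private lemma smul_cross' (a : ℝ) (u v : Fin 3 → ℝ) : (a • u) ⨯₃ v = a • (u ⨯₃ v) :=
  LinearMap.map_smul₂ _ _ _ _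

end VectorAlgebra

/-! ### Auxiliary calculus lemmas -/

section Calculus

private lemma fderiv_pi_apply3 (f : ℝ × ℝ → Fin 3 → ℝ) (p v : ℝ × ℝ)
    (hf : DifferentiableAt ℝ f p) (i : Fin 3) :
    fderiv ℝ (fun q => f q i) p v = fderiv ℝ f p v i := by
  rw [fderiv_pi (differentiableAt_pi.1 hf)]; rfl

private lemma fderiv_mul_apply3 {a b : ℝ × ℝ → ℝ} {p v : ℝ × ℝ} (ha : DifferentiableAt ℝ a p)
    (hb : DifferentiableAt ℝ b p) :
    fderiv ℝ (fun q => a q * b q) p v = fderiv ℝ a p v * b p + a p * fderiv ℝ b p v := by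
  rw [fderiv_fun_mul ha hb]; simp; ring

private lemma fderiv_dot (f g : ℝ × ℝ → Fin 3 → ℝ) (p v : ℝ × ℝ) (hf : DifferentiableAt ℝ f p)
    (hg : DifferentiableAt ℝ g p) :
    fderiv ℝ (fun q => f q ⬝ᵥ g q) p v
      = fderiv ℝ f p v ⬝ᵥ g p + f p ⬝ᵥ fderiv ℝ g p v := by
  have hfi := differentiableAt_pi.1 hf
  have hgi := differentiableAt_pi.1 hg
  have h1 : (fun q => f q ⬝ᵥ g q) = (fun q => ∑ i : Fin 3, f q i * g q i) := rfl
  rw [h1, fderiv_fun_sum (fun i _ => (hfi i).fun_mul (hgi i))]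
  simp only [ContinuousLinearMap.coe_sum', Finset.sum_apply]
  rw [dotProduct, dotProduct, ← Finset.sum_add_distrib]
  refine Finset.sum_congr rfl fun i _ => ?_
  rw [fderiv_mul_apply3 (hfi i) (hgi i), fderiv_pi_apply3 f p v hf i, fderiv_pi_apply3 g p v hg i]

private lemma differentiableAt_cross {f g : ℝ × ℝ → Fin 3 → ℝ} {p : ℝ × ℝ}
    (hf : DifferentiableAt ℝ f p) (hg : DifferentiableAt ℝ g p) :
    DifferentiableAt ℝ (fun q => f q ⨯₃ g q) p := by
  have hfi := differentiableAt_pi.1 hf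
  have hgi := differentiableAt_pi.1 hg
  apply differentiableAt_pi.2
  intro i
  fin_cases i
  · exact ((hfi 1).mul (hgi 2)).sub ((hfi 2).mul (hgi 1))
  · exact ((hfi 2).mul (hgi 0)).sub ((hfi 0).mul (hgi 2))
  · exact ((hfi 0).mul (hgi 1)).sub ((hfi 1).mul (hgi 0))

private lemma fderiv_cross (f g : ℝ × ℝ → Fin 3 → ℝ) (p v : ℝ × ℝ) (hf : DifferentiableAt ℝ f p)
    (hg : DifferentiableAt ℝ g p) :
    fderiv ℝ (fun q => f q ⨯₃ g q) p v
      = fderiv ℝ f p v ⨯₃ g p + f p ⨯₃ fderiv ℝ g p v := by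
  have hfi := differentiableAt_pi.1 hf
  have hgi := differentiableAt_pi.1 hg
  have hd : DifferentiableAt ℝ (fun q => f q ⨯₃ g q) p := differentiableAt_cross hf hg
  funext i
  rw [← fderiv_pi_apply3 _ p v hd i]
  fin_cases i
  · show fderiv ℝ (fun q => f q 1 * g q 2 - f q 2 * g q 1) p v
      = (fderiv ℝ f p v 1 * g p 2 - fderiv ℝ f p v 2 * g p 1)
        + (f p 1 * fderiv ℝ g p v 2 - f p 2 * fderiv ℝ g p v 1)
    rw [fderiv_fun_sub ((hfi 1).fun_mul (hgi 2)) ((hfi 2).fun_mul (hgi 1))]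
    simp only [ContinuousLinearMap.coe_sub', Pi.sub_apply]
    rw [fderiv_mul_apply3 (hfi 1) (hgi 2), fderiv_mul_apply3 (hfi 2) (hgi 1),
      fderiv_pi_apply3 f p v hf, fderiv_pi_apply3 f p v hf,
      fderiv_pi_apply3 g p v hg, fderiv_pi_apply3 g p v hg]
    ring
  · show fderiv ℝ (fun q => f q 2 * g q 0 - f q 0 * g q 2) p v
      = (fderiv ℝ f p v 2 * g p 0 - fderiv ℝ f p v 0 * g p 2)
        + (f p 2 * fderiv ℝ g p v 0 - f p 0 * fderiv ℝ g p v 2)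
    rw [fderiv_fun_sub ((hfi 2).fun_mul (hgi 0)) ((hfi 0).fun_mul (hgi 2))]
    simp only [ContinuousLinearMap.coe_sub', Pi.sub_apply]
    rw [fderiv_mul_apply3 (hfi 2) (hgi 0), fderiv_mul_apply3 (hfi 0) (hgi 2),
      fderiv_pi_apply3 f p v hf, fderiv_pi_apply3 f p v hf,
      fderiv_pi_apply3 g p v hg, fderiv_pi_apply3 g p v hg]
    ring
  · show fderiv ℝ (fun q => f q 0 * g q 1 - f q 1 * g q 0) p v
      = (fderiv ℝ f p v 0 * g p 1 - fderiv ℝ f p v 1 * g p 0)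
        + (f p 0 * fderiv ℝ g p v 1 - f p 1 * fderiv ℝ g p v 0)
    rw [fderiv_fun_sub ((hfi 0).fun_mul (hgi 1)) ((hfi 1).fun_mul (hgi 0))]
    simp only [ContinuousLinearMap.coe_sub', Pi.sub_apply]
    rw [fderiv_mul_apply3 (hfi 0) (hgi 1), fderiv_mul_apply3 (hfi 1) (hgi 0),
      fderiv_pi_apply3 f p v hf, fderiv_pi_apply3 f p v hf,
      fderiv_pi_apply3 g p v hg, fderiv_pi_apply3 g p v hg]
    ring

private lemma fderiv_congr_on {E : Type*} [NormedAddCommGroup E] [NormedSpace ℝ E]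
    {f g : ℝ × ℝ → E} {U : Set (ℝ × ℝ)} (hU : IsOpen U) (h : ∀ q ∈ U, f q = g q)
    {p : ℝ × ℝ} (hp : p ∈ U) : fderiv ℝ f p = fderiv ℝ g p :=
  Filter.EventuallyEq.fderiv_eq (Filter.eventuallyEq_of_mem (hU.mem_nhds hp) h)

private lemma diffat_of_contDiffOn {E : Type*} [NormedAddCommGroup E] [NormedSpace ℝ E]
    {f : ℝ × ℝ → E} {U : Set (ℝ × ℝ)} (hU : IsOpen U) (hf : ContDiffOn ℝ (⊤ : ℕ∞) f U)
    {p : ℝ × ℝ} (hp : p ∈ U) : DifferentiableAt ℝ f p :=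
  ((hf.contDiffAt (hU.mem_nhds hp)).differentiableAt (by simp))

private lemma contDiffOn_Dx {U : Set (ℝ × ℝ)} (hU : IsOpen U) {f : ℝ × ℝ → Fin 3 → ℝ}
    (hf : ContDiffOn ℝ (⊤ : ℕ∞) f U) : ContDiffOn ℝ (⊤ : ℕ∞) (Dx f) U := by
  have h1 : ContDiffOn ℝ (⊤ : ℕ∞) (fderiv ℝ f) U := hf.fderiv_of_isOpen hU (by exact_mod_cast le_top)
  exact h1.clm_apply contDiffOn_const

private lemma contDiffOn_Dy {U : Set (ℝ × ℝ)} (hU : IsOpen U) {f : ℝ × ℝ → Fin 3 → ℝ}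
    (hf : ContDiffOn ℝ (⊤ : ℕ∞) f U) : ContDiffOn ℝ (⊤ : ℕ∞) (Dy f) U := by
  have h1 : ContDiffOn ℝ (⊤ : ℕ∞) (fderiv ℝ f) U := hf.fderiv_of_isOpen hU (by exact_mod_cast le_top)
  exact h1.clm_apply contDiffOn_const

private lemma contDiffOn_cross {U : Set (ℝ × ℝ)} {f g : ℝ × ℝ → Fin 3 → ℝ}
    (hf : ContDiffOn ℝ (⊤ : ℕ∞) f U) (hg : ContDiffOn ℝ (⊤ : ℕ∞) g U) :
    ContDiffOn ℝ (⊤ : ℕ∞) (fun q => f q ⨯₃ g q) U := by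
  have hfi := contDiffOn_pi.1 hf
  have hgi := contDiffOn_pi.1 hg
  apply contDiffOn_pi.2
  intro i
  fin_cases i
  · exact ((hfi 1).mul (hgi 2)).sub ((hfi 2).mul (hgi 1))
  · exact ((hfi 2).mul (hgi 0)).sub ((hfi 0).mul (hgi 2))
  · exact ((hfi 0).mul (hgi 1)).sub ((hfi 1).mul (hgi 0))

private lemma Dxy_comm {U : Set (ℝ × ℝ)} (hU : IsOpen U) {f : ℝ × ℝ → Fin 3 → ℝ}
    (hf : ContDiffOn ℝ (⊤ : ℕ∞) f U) {p : ℝ × ℝ} (hp : p ∈ U) :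
    Dx (Dy f) p = Dy (Dx f) p := by
  have hat : ContDiffAt ℝ (⊤ : ℕ∞) f p := hf.contDiffAt (hU.mem_nhds hp)
  have hsymm : IsSymmSndFDerivAt ℝ f p := hat.isSymmSndFDerivAt (by rw [minSmoothness_of_isRCLikeNormedField]; show ((2:ℕ∞) : WithTop ℕ∞) ≤ _; exact WithTop.coe_le_coe.2 le_top)
  have hd : DifferentiableAt ℝ (fderiv ℝ f) p := by
    have := hat.fderiv_right (m := 1) (by show (((1 + 1 : ℕ) : ℕ∞) : WithTop ℕ∞) ≤ _; exact WithTop.coe_le_coe.2 le_top)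
    exact this.differentiableAt one_ne_zero
  show fderiv ℝ (fun q => fderiv ℝ f q (0, 1)) p (1, 0)
      = fderiv ℝ (fun q => fderiv ℝ f q (1, 0)) p (0, 1)
  rw [fderiv_clm_apply hd (differentiableAt_const (0, 1)),
    fderiv_clm_apply hd (differentiableAt_const (1, 0))]
  simp [hsymm (1, 0) (0, 1)]

end Calculus

/-- **Vector conservation law for linear relations between the Gauss and Schief
curvatures.** In the Chebyshev setting with `h₁₁h₂₂ − h₁₂² + κh₁₂ + λ = 0` on `U`
and `P := (h₁₂ − κ) r_x − h₁₁ r_y`, `Q := h₂₂ r_x + (κ − h₁₂) r_y`, one has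
`P_y − Q_x = 2λ sin ω · n` on `U`; in particular `P_y = Q_x` on `U` iff `λ = 0`. -/
theorem vector_conservation_law
    (U : Set (ℝ × ℝ)) (hU : IsOpen U) (hUconn : IsConnected U)
    (r : ℝ × ℝ → Fin 3 → ℝ) (hr : ContDiffOn ℝ (⊤ : ℕ∞) r U)
    (ω : ℝ × ℝ → ℝ) (hω : ContDiffOn ℝ (⊤ : ℕ∞) ω U)
    (hω0 : ∀ p ∈ U, 0 < ω p) (hωπ : ∀ p ∈ U, ω p < Real.pi)
    (hxx : ∀ p ∈ U, Dx r p ⬝ᵥ Dx r p = 1)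
    (hyy : ∀ p ∈ U, Dy r p ⬝ᵥ Dy r p = 1)
    (hxy : ∀ p ∈ U, Dx r p ⬝ᵥ Dy r p = Real.cos (ω p))
    (κ lam : ℝ)
    (hrel : ∀ p ∈ U,
      h11 r ω p * h22 r ω p - (h12 r ω p) ^ 2 + κ * h12 r ω p + lam = 0)
    (P Q : ℝ × ℝ → Fin 3 → ℝ)
    (hP : ∀ p ∈ U, P p = (h12 r ω p - κ) • Dx r p - h11 r ω p • Dy r p)
    (hQ : ∀ p ∈ U, Q p = h22 r ω p • Dx r p + (κ - h12 r ω p) • Dy r p) :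
    (∀ p ∈ U, Dy P p - Dx Q p = (2 * lam * Real.sin (ω p)) • nvec r ω p)
    ∧ ((∀ p ∈ U, Dy P p = Dx Q p) ↔ lam = 0) := by
  -- basic abbreviations and positivity
  have hsin : ∀ p ∈ U, 0 < Real.sin (ω p) := fun p hp =>
    Real.sin_pos_of_pos_of_lt_pi (hω0 p hp) (hωπ p hp)
  have hsne : ∀ p ∈ U, Real.sin (ω p) ≠ 0 := fun p hp => (hsin p hp).ne'
  -- smoothness
  have hx : ContDiffOn ℝ (⊤ : ℕ∞) (Dx r) U := contDiffOn_Dx hU hr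
  have hy : ContDiffOn ℝ (⊤ : ℕ∞) (Dy r) U := contDiffOn_Dy hU hr
  have hsinC : ContDiffOn ℝ (⊤ : ℕ∞) (fun p => (Real.sin (ω p))⁻¹) U :=
    (Real.contDiff_sin.comp_contDiffOn hω).inv hsne
  have hN : ContDiffOn ℝ (⊤ : ℕ∞) (nvec r ω) U := by
    unfold nvec
    exact hsinC.smul (contDiffOn_cross hx hy)
  have hNx : ContDiffOn ℝ (⊤ : ℕ∞) (Dx (nvec r ω)) U := contDiffOn_Dx hU hN
  have hNy : ContDiffOn ℝ (⊤ : ℕ∞) (Dy (nvec r ω)) U := contDiffOn_Dy hU hN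
  -- differentiability at points of U
  have dX : ∀ p ∈ U, DifferentiableAt ℝ (Dx r) p := fun p hp => diffat_of_contDiffOn hU hx hp
  have dY : ∀ p ∈ U, DifferentiableAt ℝ (Dy r) p := fun p hp => diffat_of_contDiffOn hU hy hp
  have dN : ∀ p ∈ U, DifferentiableAt ℝ (nvec r ω) p := fun p hp => diffat_of_contDiffOn hU hN hp
  have dNx : ∀ p ∈ U, DifferentiableAt ℝ (Dx (nvec r ω)) p := fun p hp =>
    diffat_of_contDiffOn hU hNx hp
  have dNy : ∀ p ∈ U, DifferentiableAt ℝ (Dy (nvec r ω)) p := fun p hp =>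
    diffat_of_contDiffOn hU hNy hp
  -- pointwise algebra
  have hXY : ∀ p ∈ U, Dx r p ⨯₃ Dy r p = Real.sin (ω p) • nvec r ω p := by
    intro p hp
    unfold nvec
    rw [smul_smul, mul_inv_cancel₀ (hsne p hp), one_smul]
  have hNN1 : ∀ p ∈ U, nvec r ω p ⬝ᵥ nvec r ω p = 1 := by
    intro p hp
    unfold nvec
    rw [smul_dotProduct, dotProduct_smul, cross_norm_sq, hxx p hp, hyy p hp,
      hxy p hp]
    have h2 : 1 * 1 - Real.cos (ω p) ^ 2 = Real.sin (ω p) ^ 2 := by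
      nlinarith [Real.sin_sq_add_cos_sq (ω p)]
    rw [h2, smul_eq_mul, smul_eq_mul]
    field_simp [pow_two, hsne p hp]
  have hNdX : ∀ p ∈ U, nvec r ω p ⬝ᵥ Dx r p = 0 := by
    intro p hp
    unfold nvec
    rw [smul_dotProduct, cross_dot_fst3, smul_zero]
  have hNdY : ∀ p ∈ U, nvec r ω p ⬝ᵥ Dy r p = 0 := by
    intro p hp
    unfold nvec
    rw [smul_dotProduct, cross_dot_snd3, smul_zero]
  -- derivatives of the metric relations
  have Hxx : ∀ p ∈ U, ∀ v, fderiv ℝ (Dx r) p v ⬝ᵥ Dx r p = 0 := by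
    intro p hp v
    have h0 : fderiv ℝ (fun q => Dx r q ⬝ᵥ Dx r q) p = fderiv ℝ (fun _ => (1 : ℝ)) p :=
      fderiv_congr_on hU hxx hp
    have h1 := fderiv_dot (Dx r) (Dx r) p v (dX p hp) (dX p hp)
    rw [h0] at h1
    simp only [fderiv_fun_const, Pi.zero_apply, ContinuousLinearMap.zero_apply] at h1
    have h2 : Dx r p ⬝ᵥ fderiv ℝ (Dx r) p v = fderiv ℝ (Dx r) p v ⬝ᵥ Dx r p :=
      dotProduct_comm _ _
    rw [h2] at h1
    linarith
  have Hyy : ∀ p ∈ U, ∀ v, fderiv ℝ (Dy r) p v ⬝ᵥ Dy r p = 0 := by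
    intro p hp v
    have h0 : fderiv ℝ (fun q => Dy r q ⬝ᵥ Dy r q) p = fderiv ℝ (fun _ => (1 : ℝ)) p :=
      fderiv_congr_on hU hyy hp
    have h1 := fderiv_dot (Dy r) (Dy r) p v (dY p hp) (dY p hp)
    rw [h0] at h1
    simp only [fderiv_fun_const, Pi.zero_apply, ContinuousLinearMap.zero_apply] at h1
    have h2 : Dy r p ⬝ᵥ fderiv ℝ (Dy r) p v = fderiv ℝ (Dy r) p v ⬝ᵥ Dy r p :=
      dotProduct_comm _ _
    rw [h2] at h1
    linarith
  have HNN : ∀ p ∈ U, ∀ v, fderiv ℝ (nvec r ω) p v ⬝ᵥ nvec r ω p = 0 := by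
    intro p hp v
    have h0 : fderiv ℝ (fun q => nvec r ω q ⬝ᵥ nvec r ω q) p = fderiv ℝ (fun _ => (1 : ℝ)) p :=
      fderiv_congr_on hU hNN1 hp
    have h1 := fderiv_dot (nvec r ω) (nvec r ω) p v (dN p hp) (dN p hp)
    rw [h0] at h1
    simp only [fderiv_fun_const, Pi.zero_apply, ContinuousLinearMap.zero_apply] at h1
    have h2 : nvec r ω p ⬝ᵥ fderiv ℝ (nvec r ω) p v = fderiv ℝ (nvec r ω) p v ⬝ᵥ nvec r ω p :=
      dotProduct_comm _ _
    rw [h2] at h1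
    linarith
  have HNx : ∀ p ∈ U, ∀ v,
      fderiv ℝ (nvec r ω) p v ⬝ᵥ Dx r p = -(nvec r ω p ⬝ᵥ fderiv ℝ (Dx r) p v) := by
    intro p hp v
    have h0 : fderiv ℝ (fun q => nvec r ω q ⬝ᵥ Dx r q) p = fderiv ℝ (fun _ => (0 : ℝ)) p :=
      fderiv_congr_on hU hNdX hp
    have h1 := fderiv_dot (nvec r ω) (Dx r) p v (dN p hp) (dX p hp)
    rw [h0] at h1
    simp only [fderiv_fun_const, Pi.zero_apply, ContinuousLinearMap.zero_apply] at h1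
    linarith
  have HNy : ∀ p ∈ U, ∀ v,
      fderiv ℝ (nvec r ω) p v ⬝ᵥ Dy r p = -(nvec r ω p ⬝ᵥ fderiv ℝ (Dy r) p v) := by
    intro p hp v
    have h0 : fderiv ℝ (fun q => nvec r ω q ⬝ᵥ Dy r q) p = fderiv ℝ (fun _ => (0 : ℝ)) p :=
      fderiv_congr_on hU hNdY hp
    have h1 := fderiv_dot (nvec r ω) (Dy r) p v (dN p hp) (dY p hp)
    rw [h0] at h1
    simp only [fderiv_fun_const, Pi.zero_apply, ContinuousLinearMap.zero_apply] at h1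
    linarith
  -- symmetry of second derivatives
  have hsymr : ∀ p ∈ U, Dx (Dy r) p = Dy (Dx r) p := fun p hp => Dxy_comm hU hr hp
  have hsymN : ∀ p ∈ U, Dx (Dy (nvec r ω)) p = Dy (Dx (nvec r ω)) p := fun p hp =>
    Dxy_comm hU hN hp
  -- the h-coefficients as dot products
  have hd11 : ∀ p ∈ U, Dx (Dx r) p ⬝ᵥ nvec r ω p = h11 r ω p * Real.sin (ω p) := by
    intro p hp; unfold h11; field_simp [hsne p hp]
  have hd12 : ∀ p ∈ U, Dy (Dx r) p ⬝ᵥ nvec r ω p = h12 r ω p * Real.sin (ω p) := by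
    intro p hp; unfold h12; field_simp [hsne p hp]
  have hd22 : ∀ p ∈ U, Dy (Dy r) p ⬝ᵥ nvec r ω p = h22 r ω p * Real.sin (ω p) := by
    intro p hp; unfold h22; field_simp [hsne p hp]
  -- dot products of A = Dx N, B = Dy N, C = Dy (Dx r) with the frame
  have hAX : ∀ p ∈ U, Dx (nvec r ω) p ⬝ᵥ Dx r p = -(h11 r ω p * Real.sin (ω p)) := by
    intro p hp
    have := HNx p hp (1, 0)
    show fderiv ℝ (nvec r ω) p (1, 0) ⬝ᵥ Dx r p = _
    rw [this, dotProduct_comm]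
    exact congrArg Neg.neg (hd11 p hp)
  have hAY : ∀ p ∈ U, Dx (nvec r ω) p ⬝ᵥ Dy r p = -(h12 r ω p * Real.sin (ω p)) := by
    intro p hp
    have := HNy p hp (1, 0)
    show fderiv ℝ (nvec r ω) p (1, 0) ⬝ᵥ Dy r p = _
    rw [this, dotProduct_comm]
    have h2 : fderiv ℝ (Dy r) p (1, 0) = Dy (Dx r) p := hsymr p hp
    rw [h2]
    exact congrArg Neg.neg (hd12 p hp)
  have hBX : ∀ p ∈ U, Dy (nvec r ω) p ⬝ᵥ Dx r p = -(h12 r ω p * Real.sin (ω p)) := by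
    intro p hp
    have := HNx p hp (0, 1)
    show fderiv ℝ (nvec r ω) p (0, 1) ⬝ᵥ Dx r p = _
    rw [this, dotProduct_comm]
    exact congrArg Neg.neg (hd12 p hp)
  have hBY : ∀ p ∈ U, Dy (nvec r ω) p ⬝ᵥ Dy r p = -(h22 r ω p * Real.sin (ω p)) := by
    intro p hp
    have := HNy p hp (0, 1)
    show fderiv ℝ (nvec r ω) p (0, 1) ⬝ᵥ Dy r p = _
    rw [this, dotProduct_comm]
    exact congrArg Neg.neg (hd22 p hp)
  have hAN : ∀ p ∈ U, Dx (nvec r ω) p ⬝ᵥ nvec r ω p = 0 := fun p hp => HNN p hp (1, 0)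
  have hBN : ∀ p ∈ U, Dy (nvec r ω) p ⬝ᵥ nvec r ω p = 0 := fun p hp => HNN p hp (0, 1)
  have hCX : ∀ p ∈ U, Dy (Dx r) p ⬝ᵥ Dx r p = 0 := fun p hp => Hxx p hp (0, 1)
  have hCY : ∀ p ∈ U, Dy (Dx r) p ⬝ᵥ Dy r p = 0 := by
    intro p hp
    rw [← hsymr p hp]
    exact Hyy p hp (1, 0)
  -- Pythagoras
  have hsq : ∀ p ∈ U, (1:ℝ) * 1 - Real.cos (ω p) ^ 2 = Real.sin (ω p) ^ 2 := fun p hp => by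
    nlinarith [Real.sin_sq_add_cos_sq (ω p)]
  have hs2 : ∀ p ∈ U, (Real.sin (ω p)) ^ 2 ≠ 0 := fun p hp => pow_ne_zero _ (hsne p hp)
  -- expansion of A := Dx N in the tangent basis (scaled by sin²)
  have hA : ∀ p ∈ U,
      (Real.sin (ω p) ^ 2) • Dx (nvec r ω) p
        = (Real.sin (ω p) * (Real.cos (ω p) * h12 r ω p - h11 r ω p)) • Dx r p
          + (Real.sin (ω p) * (Real.cos (ω p) * h11 r ω p - h12 r ω p)) • Dy r p := by
    intro p hp
    have hg := gram_expand (Dx r p) (Dy r p) (Dx (nvec r ω) p)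
    rw [hxx p hp, hyy p hp, hxy p hp, hAX p hp, hAY p hp] at hg
    have hz : Dx (nvec r ω) p ⬝ᵥ (Dx r p ⨯₃ Dy r p) = 0 := by
      rw [hXY p hp, dotProduct_smul, hAN p hp, smul_zero]
    rw [hz, zero_smul, add_zero, hsq p hp] at hg
    rw [hg]
    match_scalars <;> ring
  -- expansion of B := Dy N
  have hB : ∀ p ∈ U,
      (Real.sin (ω p) ^ 2) • Dy (nvec r ω) p
        = (Real.sin (ω p) * (Real.cos (ω p) * h22 r ω p - h12 r ω p)) • Dx r p
          + (Real.sin (ω p) * (Real.cos (ω p) * h12 r ω p - h22 r ω p)) • Dy r p := by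
    intro p hp
    have hg := gram_expand (Dx r p) (Dy r p) (Dy (nvec r ω) p)
    rw [hxx p hp, hyy p hp, hxy p hp, hBX p hp, hBY p hp] at hg
    have hz : Dy (nvec r ω) p ⬝ᵥ (Dx r p ⨯₃ Dy r p) = 0 := by
      rw [hXY p hp, dotProduct_smul, hBN p hp, smul_zero]
    rw [hz, zero_smul, add_zero, hsq p hp] at hg
    rw [hg]
    match_scalars <;> ring
  -- expansion of C := Dy (Dx r) = r_xy
  have hC : ∀ p ∈ U, Dy (Dx r) p = h12 r ω p • (Dx r p ⨯₃ Dy r p) := by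
    intro p hp
    have hg := gram_expand (Dx r p) (Dy r p) (Dy (Dx r) p)
    rw [hxx p hp, hyy p hp, hxy p hp, hCX p hp, hCY p hp] at hg
    have hz : Dy (Dx r) p ⬝ᵥ (Dx r p ⨯₃ Dy r p) = h12 r ω p * Real.sin (ω p) ^ 2 := by
      rw [hXY p hp, dotProduct_smul, hd12 p hp, smul_eq_mul]
      ring
    rw [hz, hsq p hp] at hg
    refine smul_right_injective (Fin 3 → ℝ) (hs2 p hp) ?_
    show (Real.sin (ω p) ^ 2) • Dy (Dx r) p = (Real.sin (ω p) ^ 2) • _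
    rw [hg]
    match_scalars <;> ring
  -- cross of N with a tangent combination, scaled by sin
  have hNcross : ∀ p ∈ U, ∀ a1 a2 : ℝ,
      Real.sin (ω p) • (nvec r ω p ⨯₃ (a1 • Dx r p + a2 • Dy r p))
        = (a1 * 1 + a2 * Real.cos (ω p)) • Dy r p
          - (a1 * Real.cos (ω p) + a2 * 1) • Dx r p := by
    intro p hp a1 a2
    rw [show nvec r ω p = (Real.sin (ω p))⁻¹ • (Dx r p ⨯₃ Dy r p) from rfl]
    rw [smul_cross', crossXY_combo, hxx p hp, hyy p hp, hxy p hp, smul_smul,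
      mul_inv_cancel₀ (hsne p hp), one_smul]
  -- N ⨯₃ Dx N
  have hNA : ∀ p ∈ U, nvec r ω p ⨯₃ Dx (nvec r ω) p
      = h12 r ω p • Dx r p - h11 r ω p • Dy r p := by
    intro p hp
    have hs3 : Real.sin (ω p) ^ 3 ≠ 0 := pow_ne_zero _ (hsne p hp)
    refine smul_right_injective (Fin 3 → ℝ) hs3 ?_
    show (Real.sin (ω p) ^ 3) • (nvec r ω p ⨯₃ Dx (nvec r ω) p) = _
    have e1 : (Real.sin (ω p) ^ 3) • (nvec r ω p ⨯₃ Dx (nvec r ω) p)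
        = Real.sin (ω p) • (nvec r ω p ⨯₃ ((Real.sin (ω p) ^ 2) • Dx (nvec r ω) p)) := by
      rw [map_smul, smul_smul]
      match_scalars <;> ring
    rw [e1, hA p hp, hNcross p hp _ _]
    funext i
    simp only [Pi.smul_apply, Pi.sub_apply, Pi.add_apply, Pi.neg_apply, smul_eq_mul]
    linear_combination (Real.sin (ω p) * (h11 r ω p * Dy r p i - h12 r ω p * Dx r p i))
      * Real.sin_sq_add_cos_sq (ω p)
  -- N ⨯₃ Dy N
  have hNB : ∀ p ∈ U, nvec r ω p ⨯₃ Dy (nvec r ω) p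
      = h22 r ω p • Dx r p - h12 r ω p • Dy r p := by
    intro p hp
    have hs3 : Real.sin (ω p) ^ 3 ≠ 0 := pow_ne_zero _ (hsne p hp)
    refine smul_right_injective (Fin 3 → ℝ) hs3 ?_
    show (Real.sin (ω p) ^ 3) • (nvec r ω p ⨯₃ Dy (nvec r ω) p) = _
    have e1 : (Real.sin (ω p) ^ 3) • (nvec r ω p ⨯₃ Dy (nvec r ω) p)
        = Real.sin (ω p) • (nvec r ω p ⨯₃ ((Real.sin (ω p) ^ 2) • Dy (nvec r ω) p)) := by
      rw [map_smul, smul_smul]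
      match_scalars <;> ring
    rw [e1, hB p hp, hNcross p hp _ _]
    funext i
    simp only [Pi.smul_apply, Pi.sub_apply, Pi.add_apply, Pi.neg_apply, smul_eq_mul]
    linear_combination (Real.sin (ω p) * (h12 r ω p * Dy r p i - h22 r ω p * Dx r p i))
      * Real.sin_sq_add_cos_sq (ω p)
  -- Dy N ⨯₃ Dx N
  have hBA : ∀ p ∈ U, Dy (nvec r ω) p ⨯₃ Dx (nvec r ω) p
      = ((h12 r ω p) ^ 2 - h11 r ω p * h22 r ω p) • (Dx r p ⨯₃ Dy r p) := by
    intro p hp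
    have hs4 : (Real.sin (ω p) ^ 2) * (Real.sin (ω p) ^ 2) ≠ 0 :=
      mul_ne_zero (hs2 p hp) (hs2 p hp)
    refine smul_right_injective (Fin 3 → ℝ) hs4 ?_
    show ((Real.sin (ω p) ^ 2) * (Real.sin (ω p) ^ 2)) • (Dy (nvec r ω) p ⨯₃ Dx (nvec r ω) p) = _
    have e1 : ((Real.sin (ω p) ^ 2) * (Real.sin (ω p) ^ 2))
          • (Dy (nvec r ω) p ⨯₃ Dx (nvec r ω) p)
        = ((Real.sin (ω p) ^ 2) • Dy (nvec r ω) p) ⨯₃ ((Real.sin (ω p) ^ 2) • Dx (nvec r ω) p) := by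
      rw [smul_cross', map_smul, smul_smul]
    rw [e1, hA p hp, hB p hp, cross_combo]
    funext i
    simp only [Pi.smul_apply, Pi.sub_apply, Pi.add_apply, Pi.neg_apply, smul_eq_mul]
    linear_combination (Real.sin (ω p) ^ 2 * (h11 r ω p * h22 r ω p - h12 r ω p ^ 2)
      * (Dx r p ⨯₃ Dy r p) i) * Real.sin_sq_add_cos_sq (ω p)
  -- P and Q rewritten via the normal field
  have hPeq : ∀ q ∈ U, P q = nvec r ω q ⨯₃ Dx (nvec r ω) q - κ • Dx r q := by
    intro q hq
    rw [hP q hq, hNA q hq]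
    match_scalars <;> ring
  have hQeq : ∀ q ∈ U, Q q = nvec r ω q ⨯₃ Dy (nvec r ω) q + κ • Dy r q := by
    intro q hq
    rw [hQ q hq, hNB q hq]
    match_scalars <;> ring
  -- the curl computation
  have main : ∀ p ∈ U, Dy P p - Dx Q p = (2 * lam * Real.sin (ω p)) • nvec r ω p := by
    intro p hp
    have hDyP : Dy P p = Dy (nvec r ω) p ⨯₃ Dx (nvec r ω) p
        + nvec r ω p ⨯₃ Dy (Dx (nvec r ω)) p - κ • Dy (Dx r) p := by
      have hc : fderiv ℝ P p
          = fderiv ℝ (fun q => nvec r ω q ⨯₃ Dx (nvec r ω) q - κ • Dx r q) p :=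
        fderiv_congr_on hU hPeq hp
      show fderiv ℝ P p (0, 1) = _
      rw [hc]
      have hcross : DifferentiableAt ℝ (fun q => nvec r ω q ⨯₃ Dx (nvec r ω) q) p :=
        differentiableAt_cross (dN p hp) (dNx p hp)
      rw [fderiv_fun_sub hcross ((dX p hp).fun_const_smul κ)]
      simp only [ContinuousLinearMap.coe_sub', Pi.sub_apply]
      rw [fderiv_cross _ _ p (0, 1) (dN p hp) (dNx p hp), fderiv_fun_const_smul (dX p hp)]
      simp only [ContinuousLinearMap.coe_smul', Pi.smul_apply]
      rfl
    have hDxQ : Dx Q p = Dx (nvec r ω) p ⨯₃ Dy (nvec r ω) p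
        + nvec r ω p ⨯₃ Dx (Dy (nvec r ω)) p + κ • Dx (Dy r) p := by
      have hc : fderiv ℝ Q p
          = fderiv ℝ (fun q => nvec r ω q ⨯₃ Dy (nvec r ω) q + κ • Dy r q) p :=
        fderiv_congr_on hU hQeq hp
      show fderiv ℝ Q p (1, 0) = _
      rw [hc]
      have hcross : DifferentiableAt ℝ (fun q => nvec r ω q ⨯₃ Dy (nvec r ω) q) p :=
        differentiableAt_cross (dN p hp) (dNy p hp)
      rw [fderiv_fun_add hcross ((dY p hp).fun_const_smul κ)]
      simp only [ContinuousLinearMap.add_apply]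
      rw [fderiv_cross _ _ p (1, 0) (dN p hp) (dNy p hp), fderiv_fun_const_smul (dY p hp)]
      simp only [ContinuousLinearMap.coe_smul', Pi.smul_apply]
      rfl
    have hAB : Dx (nvec r ω) p ⨯₃ Dy (nvec r ω) p
        = -(Dy (nvec r ω) p ⨯₃ Dx (nvec r ω) p) := (cross_anticomm _ _).symm
    rw [hDyP, hDxQ, hsymN p hp, hsymr p hp, hAB, hBA p hp, hC p hp, hXY p hp]
    funext i
    simp only [Pi.smul_apply, Pi.sub_apply, Pi.add_apply, Pi.neg_apply, smul_eq_mul]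
    linear_combination (-2 * Real.sin (ω p) * nvec r ω p i) * hrel p hp
  refine ⟨main, ?_, ?_⟩
  · intro hall
    obtain ⟨p, hp⟩ := hUconn.nonempty
    have h0 := main p hp
    rw [hall p hp, sub_self] at h0
    have h1 : ((2 * lam * Real.sin (ω p)) • nvec r ω p) ⬝ᵥ nvec r ω p = 0 := by
      rw [← h0, zero_dotProduct]
    rw [smul_dotProduct, hNN1 p hp, smul_eq_mul, mul_one] at h1
    have h2 : lam * Real.sin (ω p) = 0 := by linarith
    rcases mul_eq_zero.1 h2 with h | h
    · exact h
    · exact absurd h (hsne p hp)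
  · intro h0 p hp
    have hm := main p hp
    rw [h0] at hm
    simp only [mul_zero, zero_mul, zero_smul] at hm
    exact sub_eq_zero.1 hm
end

section
/- (Associated surfaces of a concordant Chebyshev net: common normal and first fundamental form.) In the concordant Chebyshev setting with potential m, set r⁺ := r + m/κ and r⁻ := r − m/κ. Then on U: (a) r⁺_x·n = r⁺_y·n = r⁻_x·n = r⁻_y·n = 0, so r, r⁺, r⁻ have the same unit normal n at corresponding points; (b) κ²(r⁺_x·r⁺_x) = h₁₁² − 2 h₁₁h₁₂ cos ω + h₁₂²; and (c) for both choices of sign, (r±_x·r±_x)(r±_y·r±_y) − (r±_x·r±_y)² = (h₁₂ sin ω/κ)². In particular r⁺ and r⁻ are immersions at every point of U where h₁₂ ≠ 0. -/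
open scoped Matrix

/-- The associated surface `r⁺ = r + m/κ`. -/
noncomputable def rplus (r m : ℝ × ℝ → Fin 3 → ℝ) (κ : ℝ) (p : ℝ × ℝ) : Fin 3 → ℝ :=
  r p + κ⁻¹ • m p

/-- The associated surface `r⁻ = r − m/κ`. -/
noncomputable def rminus (r m : ℝ × ℝ → Fin 3 → ℝ) (κ : ℝ) (p : ℝ × ℝ) : Fin 3 → ℝ :=
  r p - κ⁻¹ • m p

/-- **Associated surfaces of a concordant Chebyshev net: common normal and first
fundamental form.** With `r⁺ = r + m/κ`, `r⁻ = r − m/κ`: (a) all four tangent vectors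
of `r⁺`, `r⁻` are orthogonal to `n`; (b) `κ²(r⁺_x·r⁺_x) = h₁₁² − 2h₁₁h₁₂ cos ω + h₁₂²`;
(c) `det I^± = (h₁₂ sin ω/κ)²`; and `r⁺`, `r⁻` are immersions wherever `h₁₂ ≠ 0`. -/
theorem associated_surfaces_normal_and_first_form
    (U : Set (ℝ × ℝ)) (hU : IsOpen U) (hUconn : IsConnected U)
    (r : ℝ × ℝ → Fin 3 → ℝ) (hr : ContDiffOn ℝ (⊤ : ℕ∞) r U)
    (ω : ℝ × ℝ → ℝ) (hω : ContDiffOn ℝ (⊤ : ℕ∞) ω U)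
    (hω0 : ∀ p ∈ U, 0 < ω p) (hωπ : ∀ p ∈ U, ω p < Real.pi)
    (hxx : ∀ p ∈ U, Dx r p ⬝ᵥ Dx r p = 1)
    (hyy : ∀ p ∈ U, Dy r p ⬝ᵥ Dy r p = 1)
    (hxy : ∀ p ∈ U, Dx r p ⬝ᵥ Dy r p = Real.cos (ω p))
    (κ : ℝ) (hκ : κ ≠ 0)
    (hconc : ∀ p ∈ U,
      h11 r ω p * h22 r ω p - (h12 r ω p) ^ 2 + κ * h12 r ω p = 0)
    (m : ℝ × ℝ → Fin 3 → ℝ) (hm : ContDiffOn ℝ (⊤ : ℕ∞) m U)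
    (hmx : ∀ p ∈ U, Dx m p = (h12 r ω p - κ) • Dx r p - h11 r ω p • Dy r p)
    (hmy : ∀ p ∈ U, Dy m p = h22 r ω p • Dx r p + (κ - h12 r ω p) • Dy r p)
    :
    (∀ p ∈ U,
        Dx (rplus r m κ) p ⬝ᵥ nvec r ω p = 0 ∧
        Dy (rplus r m κ) p ⬝ᵥ nvec r ω p = 0 ∧
        Dx (rminus r m κ) p ⬝ᵥ nvec r ω p = 0 ∧
        Dy (rminus r m κ) p ⬝ᵥ nvec r ω p = 0)
    ∧ (∀ p ∈ U,
        κ ^ 2 * (Dx (rplus r m κ) p ⬝ᵥ Dx (rplus r m κ) p)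
          = (h11 r ω p) ^ 2 - 2 * h11 r ω p * h12 r ω p * Real.cos (ω p)
            + (h12 r ω p) ^ 2)
    ∧ (∀ p ∈ U,
        (Dx (rplus r m κ) p ⬝ᵥ Dx (rplus r m κ) p)
            * (Dy (rplus r m κ) p ⬝ᵥ Dy (rplus r m κ) p)
          - (Dx (rplus r m κ) p ⬝ᵥ Dy (rplus r m κ) p) ^ 2
          = (h12 r ω p * Real.sin (ω p) / κ) ^ 2
        ∧ (Dx (rminus r m κ) p ⬝ᵥ Dx (rminus r m κ) p)
            * (Dy (rminus r m κ) p ⬝ᵥ Dy (rminus r m κ) p)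
          - (Dx (rminus r m κ) p ⬝ᵥ Dy (rminus r m κ) p) ^ 2
          = (h12 r ω p * Real.sin (ω p) / κ) ^ 2)
    ∧ (∀ p ∈ U, h12 r ω p ≠ 0 →
        LinearIndependent ℝ ![Dx (rplus r m κ) p, Dy (rplus r m κ) p]
        ∧ LinearIndependent ℝ ![Dx (rminus r m κ) p, Dy (rminus r m κ) p]) := by

  -- differentiability
  have hdiff : ∀ p ∈ U,
      Dx (rplus r m κ) p = Dx r p + κ⁻¹ • Dx m p ∧
      Dy (rplus r m κ) p = Dy r p + κ⁻¹ • Dy m p ∧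
      Dx (rminus r m κ) p = Dx r p - κ⁻¹ • Dx m p ∧
      Dy (rminus r m κ) p = Dy r p - κ⁻¹ • Dy m p := by
    intro p hp
    have hdr : DifferentiableAt ℝ r p :=
      (hr.contDiffAt (hU.mem_nhds hp)).differentiableAt (by simp)
    have hdm : DifferentiableAt ℝ m p :=
      (hm.contDiffAt (hU.mem_nhds hp)).differentiableAt (by simp)
    refine ⟨?_, ?_, ?_, ?_⟩ <;>
      [unfold Dx rplus; unfold Dy rplus; unfold Dx rminus; unfold Dy rminus] <;>
      [rw [fderiv_fun_add hdr (hdm.fun_const_smul _), fderiv_fun_const_smul hdm];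
       rw [fderiv_fun_add hdr (hdm.fun_const_smul _), fderiv_fun_const_smul hdm];
       rw [fderiv_fun_sub hdr (hdm.fun_const_smul _), fderiv_fun_const_smul hdm];
       rw [fderiv_fun_sub hdr (hdm.fun_const_smul _), fderiv_fun_const_smul hdm]] <;> simp
  -- express the tangent vectors of r⁺, r⁻ in the basis (r_x, r_y)
  have key : ∀ p ∈ U,
      Dx (rplus r m κ) p = κ⁻¹ • (h12 r ω p • Dx r p - h11 r ω p • Dy r p) ∧
      Dy (rplus r m κ) p
        = κ⁻¹ • (h22 r ω p • Dx r p + (2 * κ - h12 r ω p) • Dy r p) ∧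
      Dx (rminus r m κ) p
        = κ⁻¹ • ((2 * κ - h12 r ω p) • Dx r p + h11 r ω p • Dy r p) ∧
      Dy (rminus r m κ) p
        = κ⁻¹ • (-(h22 r ω p) • Dx r p + h12 r ω p • Dy r p) := by
    intro p hp
    obtain ⟨e1, e2, e3, e4⟩ := hdiff p hp
    rw [e1, e2, e3, e4, hmx p hp, hmy p hp]
    refine ⟨?_, ?_, ?_, ?_⟩ <;> match_scalars <;> field_simp <;> ring
  have hsin : ∀ p ∈ U, Real.sin (ω p) ≠ 0 := fun p hp =>
    ne_of_gt (Real.sin_pos_of_pos_of_lt_pi (hω0 p hp) (hωπ p hp))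
  -- part (a)
  have partA : ∀ p ∈ U,
      Dx (rplus r m κ) p ⬝ᵥ nvec r ω p = 0 ∧
      Dy (rplus r m κ) p ⬝ᵥ nvec r ω p = 0 ∧
      Dx (rminus r m κ) p ⬝ᵥ nvec r ω p = 0 ∧
      Dy (rminus r m κ) p ⬝ᵥ nvec r ω p = 0 := by
    intro p hp
    obtain ⟨e1, e2, e3, e4⟩ := key p hp
    rw [e1, e2, e3, e4]
    unfold nvec
    refine ⟨?_, ?_, ?_, ?_⟩ <;>
      simp only [smul_dotProduct, dotProduct_smul, sub_dotProduct,
        add_dotProduct, neg_dotProduct, dot_self_cross, dot_cross_self,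
        smul_eq_mul, mul_zero, sub_zero, add_zero, neg_zero, zero_add, smul_zero]
  -- generic dot products of the combinations
  have hyx : ∀ p ∈ U, Dy r p ⬝ᵥ Dx r p = Real.cos (ω p) := by
    intro p hp; rw [dotProduct_comm]; exact hxy p hp
  have dot : ∀ p ∈ U, ∀ a b c d : ℝ,
      (κ⁻¹ • (a • Dx r p + b • Dy r p)) ⬝ᵥ (κ⁻¹ • (c • Dx r p + d • Dy r p))
        = κ⁻¹ * κ⁻¹ * (a * c + b * d + (a * d + b * c) * Real.cos (ω p)) := by
    intro p hp a b c d
    simp [dotProduct_smul, smul_dotProduct, add_dotProduct,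
      dotProduct_add, hxx p hp, hyy p hp, hxy p hp, hyx p hp]
    ring
  -- rewrite all four in add form
  have keyA : ∀ p ∈ U,
      Dx (rplus r m κ) p = κ⁻¹ • (h12 r ω p • Dx r p + (-(h11 r ω p)) • Dy r p) ∧
      Dy (rplus r m κ) p
        = κ⁻¹ • (h22 r ω p • Dx r p + (2 * κ - h12 r ω p) • Dy r p) ∧
      Dx (rminus r m κ) p
        = κ⁻¹ • ((2 * κ - h12 r ω p) • Dx r p + h11 r ω p • Dy r p) ∧
      Dy (rminus r m κ) p
        = κ⁻¹ • ((-(h22 r ω p)) • Dx r p + h12 r ω p • Dy r p) := by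
    intro p hp
    obtain ⟨e1, e2, e3, e4⟩ := key p hp
    refine ⟨?_, e2, e3, e4⟩
    rw [e1]; module
  -- part (b)
  have partB : ∀ p ∈ U,
      κ ^ 2 * (Dx (rplus r m κ) p ⬝ᵥ Dx (rplus r m κ) p)
        = (h11 r ω p) ^ 2 - 2 * h11 r ω p * h12 r ω p * Real.cos (ω p)
          + (h12 r ω p) ^ 2 := by
    intro p hp
    obtain ⟨e1, -, -, -⟩ := keyA p hp
    rw [e1, dot p hp]
    field_simp
    ring
  -- part (c)
  have partC : ∀ p ∈ U,
      (Dx (rplus r m κ) p ⬝ᵥ Dx (rplus r m κ) p)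
          * (Dy (rplus r m κ) p ⬝ᵥ Dy (rplus r m κ) p)
        - (Dx (rplus r m κ) p ⬝ᵥ Dy (rplus r m κ) p) ^ 2
        = (h12 r ω p * Real.sin (ω p) / κ) ^ 2
      ∧ (Dx (rminus r m κ) p ⬝ᵥ Dx (rminus r m κ) p)
          * (Dy (rminus r m κ) p ⬝ᵥ Dy (rminus r m κ) p)
        - (Dx (rminus r m κ) p ⬝ᵥ Dy (rminus r m κ) p) ^ 2
        = (h12 r ω p * Real.sin (ω p) / κ) ^ 2 := by
    intro p hp
    obtain ⟨e1, e2, e3, e4⟩ := keyA p hp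
    have hc := hconc p hp
    have hs : Real.sin (ω p) ^ 2 = 1 - Real.cos (ω p) ^ 2 := by
      have := Real.sin_sq_add_cos_sq (ω p); linarith
    have hu : κ⁻¹ * κ = 1 := inv_mul_cancel₀ hκ
    set a := h11 r ω p
    set b := h12 r ω p
    set d := h22 r ω p
    set c := Real.cos (ω p)
    set s := Real.sin (ω p)
    constructor
    · rw [e1, e2, dot p hp, dot p hp, dot p hp]
      linear_combination (κ⁻¹ ^ 4 * (1 - c ^ 2) * ((b * (2 * κ - b) + a * d) + κ * b)) * hc -
        (κ⁻¹ ^ 4 * κ ^ 2 * b ^ 2) * hs + (κ⁻¹ ^ 2 * b ^ 2 * s ^ 2 * (κ⁻¹ * κ + 1)) * hu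
    · rw [e3, e4, dot p hp, dot p hp, dot p hp]
      linear_combination (κ⁻¹ ^ 4 * (1 - c ^ 2) * ((b * (2 * κ - b) + a * d) + κ * b)) * hc -
        (κ⁻¹ ^ 4 * κ ^ 2 * b ^ 2) * hs + (κ⁻¹ ^ 2 * b ^ 2 * s ^ 2 * (κ⁻¹ * κ + 1)) * hu
  refine ⟨partA, partB, partC, ?_⟩
  -- immersions
  intro p hp h12ne
  have hDne : (h12 r ω p * Real.sin (ω p) / κ) ^ 2 ≠ 0 := by
    apply pow_ne_zero
    exact div_ne_zero (mul_ne_zero h12ne (hsin p hp)) hκ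
  obtain ⟨hCp, hCm⟩ := partC p hp
  constructor
  · rw [LinearIndependent.pair_iff]
    intro s t hst
    have e1 : (s • Dx (rplus r m κ) p + t • Dy (rplus r m κ) p) ⬝ᵥ Dx (rplus r m κ) p = 0 := by
      rw [hst]; simp
    have e2 : (s • Dx (rplus r m κ) p + t • Dy (rplus r m κ) p) ⬝ᵥ Dy (rplus r m κ) p = 0 := by
      rw [hst]; simp
    rw [add_dotProduct, smul_dotProduct, smul_dotProduct] at e1 e2
    set aa := Dx (rplus r m κ) p ⬝ᵥ Dx (rplus r m κ) p with haa
    set bb := Dy (rplus r m κ) p ⬝ᵥ Dy (rplus r m κ) p with hbb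
    set ab := Dx (rplus r m κ) p ⬝ᵥ Dy (rplus r m κ) p with hab
    have hba : Dy (rplus r m κ) p ⬝ᵥ Dx (rplus r m κ) p = ab := dotProduct_comm _ _
    rw [hba] at e1
    simp only [smul_eq_mul] at e1 e2
    have hD : aa * bb - ab ^ 2 ≠ 0 := hCp ▸ hDne
    constructor
    · have : s * (aa * bb - ab ^ 2) = 0 := by linear_combination bb * e1 - ab * e2
      exact (mul_eq_zero.mp this).resolve_right hD
    · have : t * (aa * bb - ab ^ 2) = 0 := by linear_combination aa * e2 - ab * e1
      exact (mul_eq_zero.mp this).resolve_right hD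
  · rw [LinearIndependent.pair_iff]
    intro s t hst
    have e1 : (s • Dx (rminus r m κ) p + t • Dy (rminus r m κ) p) ⬝ᵥ Dx (rminus r m κ) p = 0 := by
      rw [hst]; simp
    have e2 : (s • Dx (rminus r m κ) p + t • Dy (rminus r m κ) p) ⬝ᵥ Dy (rminus r m κ) p = 0 := by
      rw [hst]; simp
    rw [add_dotProduct, smul_dotProduct, smul_dotProduct] at e1 e2
    set aa := Dx (rminus r m κ) p ⬝ᵥ Dx (rminus r m κ) p with haa
    set bb := Dy (rminus r m κ) p ⬝ᵥ Dy (rminus r m κ) p with hbb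
    set ab := Dx (rminus r m κ) p ⬝ᵥ Dy (rminus r m κ) p with hab
    have hba : Dy (rminus r m κ) p ⬝ᵥ Dx (rminus r m κ) p = ab := dotProduct_comm _ _
    rw [hba] at e1
    simp only [smul_eq_mul] at e1 e2
    have hD : aa * bb - ab ^ 2 ≠ 0 := hCm ▸ hDne
    constructor
    · have : s * (aa * bb - ab ^ 2) = 0 := by linear_combination bb * e1 - ab * e2
      exact (mul_eq_zero.mp this).resolve_right hD
    · have : t * (aa * bb - ab ^ 2) = 0 := by linear_combination aa * e2 - ab * e1
      exact (mul_eq_zero.mp this).resolve_right hD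
end

section
/- (The associated surface r⁻ is pseudospherical with asymptotic y-direction.) In the concordant Chebyshev setting with potential m, set r⁻ := r − m/κ. Then on U: r⁻_xx·n = 2 h₁₁ sin ω, r⁻_xy·n = h₁₂ sin ω, and r⁻_yy·n = 0. Consequently, at every point of U where h₁₂ ≠ 0, the Gauss curvature of r⁻ equals −κ²: ((r⁻_xx·n)(r⁻_yy·n) − (r⁻_xy·n)²) / ((r⁻_x·r⁻_x)(r⁻_y·r⁻_y) − (r⁻_x·r⁻_y)²) = −κ², and the direction ∂/∂y is asymptotic for r⁻. -/
open scoped Matrix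

/- ### Auxiliary lemmas -/

lemma contDiffOn_dot {n : WithTop ℕ∞} {f g : ℝ × ℝ → Fin 3 → ℝ} {U : Set (ℝ × ℝ)}
    (hf : ContDiffOn ℝ n f U) (hg : ContDiffOn ℝ n g U) :
    ContDiffOn ℝ n (fun p => f p ⬝ᵥ g p) U := by
  have hc : ∀ (h : ℝ × ℝ → Fin 3 → ℝ), ContDiffOn ℝ n h U → ∀ i : Fin 3,
      ContDiffOn ℝ n (fun p => h p i) U := fun h hh i =>
    (ContinuousLinearMap.proj (R := ℝ) (φ := fun _ : Fin 3 => ℝ) i).contDiff.comp_contDiffOn hh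
  simp only [dotProduct]
  exact ContDiffOn.sum fun i _ => (hc f hf i).mul (hc g hg i)

lemma fderiv_apply_const {r : ℝ × ℝ → Fin 3 → ℝ} {p : ℝ × ℝ} (v w : ℝ × ℝ)
    (hd : DifferentiableAt ℝ (fderiv ℝ r) p) :
    fderiv ℝ (fun q => fderiv ℝ r q v) p w = fderiv ℝ (fderiv ℝ r) p w v := by
  rw [fderiv_clm_apply hd (differentiableAt_const v)]
  simp

lemma symm_mixed {r : ℝ × ℝ → Fin 3 → ℝ} {U : Set (ℝ × ℝ)} {p : ℝ × ℝ} (hU : IsOpen U)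
    (hr : ContDiffOn ℝ (⊤ : ℕ∞) r U) (hp : p ∈ U) : Dx (Dy r) p = Dy (Dx r) p := by
  have hmem := hU.mem_nhds hp
  have hd : DifferentiableAt ℝ (fderiv ℝ r) p :=
    ((hr.fderiv_of_isOpen hU (m := 1) (WithTop.coe_le_coe.mpr le_top)).contDiffAt hmem).differentiableAt one_ne_zero
  have hsymm : IsSymmSndFDerivAt ℝ r p :=
    (hr.contDiffAt hmem).isSymmSndFDerivAt (by rw [minSmoothness_of_isRCLikeNormedField]; exact WithTop.coe_le_coe.mpr le_top)
  show fderiv ℝ (fun q => fderiv ℝ r q (0,1)) p (1,0)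
      = fderiv ℝ (fun q => fderiv ℝ r q (1,0)) p (0,1)
  rw [fderiv_apply_const _ _ hd, fderiv_apply_const _ _ hd, hsymm.eq]

lemma fderiv_smul_dot {c : ℝ × ℝ → ℝ} {u : ℝ × ℝ → Fin 3 → ℝ} {p w : ℝ × ℝ} {n : Fin 3 → ℝ}
    (hc : DifferentiableAt ℝ c p) (hu : DifferentiableAt ℝ u p) (hn : u p ⬝ᵥ n = 0) :
    fderiv ℝ (fun q => c q • u q) p w ⬝ᵥ n = c p * (fderiv ℝ u p w ⬝ᵥ n) := by
  rw [fderiv_fun_smul hc hu]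
  simp [ContinuousLinearMap.add_apply, ContinuousLinearMap.smul_apply,
    ContinuousLinearMap.smulRight_apply, add_dotProduct, smul_dotProduct, hn,
    smul_eq_mul]

/-- **The associated surface `r⁻` is pseudospherical with asymptotic `y`-direction.**
`r⁻_xx·n = 2h₁₁ sin ω`, `r⁻_xy·n = h₁₂ sin ω`, `r⁻_yy·n = 0`; hence wherever `h₁₂ ≠ 0`
the Gauss curvature of `r⁻` equals `−κ²` and `∂/∂y` is asymptotic for `r⁻`. -/
theorem associated_surface_minus_pseudospherical
    (U : Set (ℝ × ℝ)) (hU : IsOpen U) (hUconn : IsConnected U)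
    (r : ℝ × ℝ → Fin 3 → ℝ) (hr : ContDiffOn ℝ (⊤ : ℕ∞) r U)
    (ω : ℝ × ℝ → ℝ) (hω : ContDiffOn ℝ (⊤ : ℕ∞) ω U)
    (hω0 : ∀ p ∈ U, 0 < ω p) (hωπ : ∀ p ∈ U, ω p < Real.pi)
    (hxx : ∀ p ∈ U, Dx r p ⬝ᵥ Dx r p = 1)
    (hyy : ∀ p ∈ U, Dy r p ⬝ᵥ Dy r p = 1)
    (hxy : ∀ p ∈ U, Dx r p ⬝ᵥ Dy r p = Real.cos (ω p))
    (κ : ℝ) (hκ : κ ≠ 0)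
    (hconc : ∀ p ∈ U,
      h11 r ω p * h22 r ω p - (h12 r ω p) ^ 2 + κ * h12 r ω p = 0)
    (m : ℝ × ℝ → Fin 3 → ℝ) (hm : ContDiffOn ℝ (⊤ : ℕ∞) m U)
    (hmx : ∀ p ∈ U, Dx m p = (h12 r ω p - κ) • Dx r p - h11 r ω p • Dy r p)
    (hmy : ∀ p ∈ U, Dy m p = h22 r ω p • Dx r p + (κ - h12 r ω p) • Dy r p)
    :
    (∀ p ∈ U,
        Dx (Dx (rminus r m κ)) p ⬝ᵥ nvec r ω p = 2 * h11 r ω p * Real.sin (ω p)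
        ∧ Dy (Dx (rminus r m κ)) p ⬝ᵥ nvec r ω p = h12 r ω p * Real.sin (ω p)
        ∧ Dy (Dy (rminus r m κ)) p ⬝ᵥ nvec r ω p = 0)
    ∧ (∀ p ∈ U, h12 r ω p ≠ 0 →
        ((Dx (Dx (rminus r m κ)) p ⬝ᵥ nvec r ω p)
            * (Dy (Dy (rminus r m κ)) p ⬝ᵥ nvec r ω p)
          - (Dy (Dx (rminus r m κ)) p ⬝ᵥ nvec r ω p) ^ 2)
        / ((Dx (rminus r m κ) p ⬝ᵥ Dx (rminus r m κ) p)
            * (Dy (rminus r m κ) p ⬝ᵥ Dy (rminus r m κ) p)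
          - (Dx (rminus r m κ) p ⬝ᵥ Dy (rminus r m κ) p) ^ 2)
        = -κ ^ 2) := by
  have hUn : ∀ p ∈ U, U ∈ nhds p := fun p hp => hU.mem_nhds hp
  have hsin : ∀ p ∈ U, 0 < Real.sin (ω p) := fun p hp =>
    Real.sin_pos_of_pos_of_lt_pi (hω0 p hp) (hωπ p hp)
  -- differentiability infrastructure
  have hDxr : ContDiffOn ℝ 1 (Dx r) U :=
    (hr.fderiv_of_isOpen hU (WithTop.coe_le_coe.mpr le_top)).clm_apply contDiffOn_const
  have hDyr : ContDiffOn ℝ 1 (Dy r) U :=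
    (hr.fderiv_of_isOpen hU (WithTop.coe_le_coe.mpr le_top)).clm_apply contDiffOn_const
  have hDxm : ContDiffOn ℝ 1 (Dx m) U :=
    (hm.fderiv_of_isOpen hU (WithTop.coe_le_coe.mpr le_top)).clm_apply contDiffOn_const
  have hDym : ContDiffOn ℝ 1 (Dy m) U :=
    (hm.fderiv_of_isOpen hU (WithTop.coe_le_coe.mpr le_top)).clm_apply contDiffOn_const
  have hdr : ∀ p ∈ U, DifferentiableAt ℝ r p := fun p hp =>
    (hr.contDiffAt (hUn p hp)).differentiableAt (by simp)
  have hdm : ∀ p ∈ U, DifferentiableAt ℝ m p := fun p hp =>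
    (hm.contDiffAt (hUn p hp)).differentiableAt (by simp)
  have hdDxr : ∀ p ∈ U, DifferentiableAt ℝ (Dx r) p := fun p hp =>
    (hDxr.contDiffAt (hUn p hp)).differentiableAt one_ne_zero
  have hdDyr : ∀ p ∈ U, DifferentiableAt ℝ (Dy r) p := fun p hp =>
    (hDyr.contDiffAt (hUn p hp)).differentiableAt one_ne_zero
  have hdDxm : ∀ p ∈ U, DifferentiableAt ℝ (Dx m) p := fun p hp =>
    (hDxm.contDiffAt (hUn p hp)).differentiableAt one_ne_zero
  have hdDym : ∀ p ∈ U, DifferentiableAt ℝ (Dy m) p := fun p hp =>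
    (hDym.contDiffAt (hUn p hp)).differentiableAt one_ne_zero
  -- orthogonality of n to the tangent vectors
  have hnx : ∀ p ∈ U, Dx r p ⬝ᵥ nvec r ω p = 0 := by
    intro p hp
    show Dx r p ⬝ᵥ ((Real.sin (ω p))⁻¹ • (Dx r p ⨯₃ Dy r p)) = 0
    rw [dotProduct_smul, dot_self_cross, smul_zero]
  have hny : ∀ p ∈ U, Dy r p ⬝ᵥ nvec r ω p = 0 := by
    intro p hp
    show Dy r p ⬝ᵥ ((Real.sin (ω p))⁻¹ • (Dx r p ⨯₃ Dy r p)) = 0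
    rw [dotProduct_smul, dot_cross_self, smul_zero]
  -- second fundamental form identities
  have hXX : ∀ p ∈ U, Dx (Dx r) p ⬝ᵥ nvec r ω p = h11 r ω p * Real.sin (ω p) := by
    intro p hp
    rw [h11, div_mul_cancel₀ _ (hsin p hp).ne']
  have hXY : ∀ p ∈ U, Dy (Dx r) p ⬝ᵥ nvec r ω p = h12 r ω p * Real.sin (ω p) := by
    intro p hp
    rw [h12, div_mul_cancel₀ _ (hsin p hp).ne']
  have hYY : ∀ p ∈ U, Dy (Dy r) p ⬝ᵥ nvec r ω p = h22 r ω p * Real.sin (ω p) := by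
    intro p hp
    rw [h22, div_mul_cancel₀ _ (hsin p hp).ne']
  -- differentiability of h11, h12, h22 via their expressions in terms of m-derivatives
  have hco : ContDiffOn ℝ 1 (fun q => Real.cos (ω q)) U :=
    Real.contDiff_cos.comp_contDiffOn (hω.of_le (by simp))
  have hsi : ContDiffOn ℝ 1 (fun q => Real.sin (ω q)) U :=
    Real.contDiff_sin.comp_contDiffOn (hω.of_le (by simp))
  have hsne : ∀ q ∈ U, Real.sin (ω q) ^ 2 ≠ 0 := fun q hq => pow_ne_zero _ (hsin q hq).ne'
  have hs2 : ∀ q ∈ U, Real.sin (ω q) ^ 2 = 1 - Real.cos (ω q) ^ 2 := by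
    intro q hq
    have := Real.sin_sq_add_cos_sq (ω q); linarith
  have hAx : ∀ q ∈ U, Dx m q ⬝ᵥ Dx r q
      = (h12 r ω q - κ) - h11 r ω q * Real.cos (ω q) := by
    intro q hq
    rw [hmx q hq]
    simp [sub_dotProduct, smul_dotProduct, smul_eq_mul, hxx q hq,
      dotProduct_comm (Dy r q) (Dx r q), hxy q hq]
  have hBx : ∀ q ∈ U, Dx m q ⬝ᵥ Dy r q
      = (h12 r ω q - κ) * Real.cos (ω q) - h11 r ω q := by
    intro q hq
    rw [hmx q hq]
    simp [sub_dotProduct, smul_dotProduct, smul_eq_mul, hyy q hq, hxy q hq]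
  have hCy : ∀ q ∈ U, Dy m q ⬝ᵥ Dx r q
      = h22 r ω q + (κ - h12 r ω q) * Real.cos (ω q) := by
    intro q hq
    rw [hmy q hq]
    simp [add_dotProduct, smul_dotProduct, smul_eq_mul, hxx q hq,
      dotProduct_comm (Dy r q) (Dx r q), hxy q hq]
  have hDy' : ∀ q ∈ U, Dy m q ⬝ᵥ Dy r q
      = h22 r ω q * Real.cos (ω q) + (κ - h12 r ω q) := by
    intro q hq
    rw [hmy q hq]
    simp [add_dotProduct, smul_dotProduct, smul_eq_mul, hyy q hq, hxy q hq]
  have heq11 : ∀ q ∈ U, h11 r ω q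
      = ((Dx m q ⬝ᵥ Dx r q) * Real.cos (ω q) - Dx m q ⬝ᵥ Dy r q) / Real.sin (ω q) ^ 2 := by
    intro q hq
    rw [hAx q hq, hBx q hq, eq_div_iff (hsne q hq), hs2 q hq]
    ring
  have heq12 : ∀ q ∈ U, h12 r ω q
      = κ + ((Dx m q ⬝ᵥ Dx r q) - (Dx m q ⬝ᵥ Dy r q) * Real.cos (ω q)) / Real.sin (ω q) ^ 2 := by
    intro q hq
    rw [hAx q hq, hBx q hq, eq_comm, add_comm, ← eq_sub_iff_add_eq, div_eq_iff (hsne q hq),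
      hs2 q hq]
    ring
  have heq22 : ∀ q ∈ U, h22 r ω q
      = ((Dy m q ⬝ᵥ Dx r q) - (Dy m q ⬝ᵥ Dy r q) * Real.cos (ω q)) / Real.sin (ω q) ^ 2 := by
    intro q hq
    rw [hCy q hq, hDy' q hq, eq_div_iff (hsne q hq), hs2 q hq]
    ring
  have hF11 : ContDiffOn ℝ 1 (fun q =>
      ((Dx m q ⬝ᵥ Dx r q) * Real.cos (ω q) - Dx m q ⬝ᵥ Dy r q) / Real.sin (ω q) ^ 2) U :=
    (((contDiffOn_dot hDxm hDxr).mul hco).sub (contDiffOn_dot hDxm hDyr)).div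
      (hsi.pow 2) hsne
  have hF12 : ContDiffOn ℝ 1 (fun q => κ +
      ((Dx m q ⬝ᵥ Dx r q) - (Dx m q ⬝ᵥ Dy r q) * Real.cos (ω q)) / Real.sin (ω q) ^ 2) U :=
    contDiffOn_const.add
      (((contDiffOn_dot hDxm hDxr).sub ((contDiffOn_dot hDxm hDyr).mul hco)).div
        (hsi.pow 2) hsne)
  have hF22 : ContDiffOn ℝ 1 (fun q =>
      ((Dy m q ⬝ᵥ Dx r q) - (Dy m q ⬝ᵥ Dy r q) * Real.cos (ω q)) / Real.sin (ω q) ^ 2) U :=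
    ((contDiffOn_dot hDym hDxr).sub ((contDiffOn_dot hDym hDyr).mul hco)).div
      (hsi.pow 2) hsne
  have hdh11 : ∀ p ∈ U, DifferentiableAt ℝ (h11 r ω) p := fun p hp =>
    ((hF11.contDiffAt (hUn p hp)).differentiableAt one_ne_zero).congr_of_eventuallyEq
      (Filter.eventuallyEq_of_mem (hUn p hp) fun q hq => heq11 q hq)
  have hdh12 : ∀ p ∈ U, DifferentiableAt ℝ (h12 r ω) p := fun p hp =>
    ((hF12.contDiffAt (hUn p hp)).differentiableAt one_ne_zero).congr_of_eventuallyEq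
      (Filter.eventuallyEq_of_mem (hUn p hp) fun q hq => heq12 q hq)
  have hdh22 : ∀ p ∈ U, DifferentiableAt ℝ (h22 r ω) p := fun p hp =>
    ((hF22.contDiffAt (hUn p hp)).differentiableAt one_ne_zero).congr_of_eventuallyEq
      (Filter.eventuallyEq_of_mem (hUn p hp) fun q hq => heq22 q hq)
  -- first derivatives of rminus
  have hdrm1 : ∀ p ∈ U, Dx (rminus r m κ) p = Dx r p - κ⁻¹ • Dx m p := by
    intro p hp
    show fderiv ℝ (fun q => r q - κ⁻¹ • m q) p (1, 0) = _
    rw [fderiv_fun_sub (g := fun q => κ⁻¹ • m q) (hdr p hp) ((hdm p hp).const_smul κ⁻¹), fderiv_fun_const_smul (hdm p hp)]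
    rfl
  have hdrm2 : ∀ p ∈ U, Dy (rminus r m κ) p = Dy r p - κ⁻¹ • Dy m p := by
    intro p hp
    show fderiv ℝ (fun q => r q - κ⁻¹ • m q) p (0, 1) = _
    rw [fderiv_fun_sub (g := fun q => κ⁻¹ • m q) (hdr p hp) ((hdm p hp).const_smul κ⁻¹), fderiv_fun_const_smul (hdm p hp)]
    rfl
  -- derivative of Dx m and Dy m, dotted with n
  have key1 : ∀ p ∈ U, ∀ w : ℝ × ℝ, fderiv ℝ (Dx m) p w ⬝ᵥ nvec r ω p =
      (h12 r ω p - κ) * (fderiv ℝ (Dx r) p w ⬝ᵥ nvec r ω p)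
      - h11 r ω p * (fderiv ℝ (Dy r) p w ⬝ᵥ nvec r ω p) := by
    intro p hp w
    have he : Dx m =ᶠ[nhds p]
        (fun q => (h12 r ω q - κ) • Dx r q - h11 r ω q • Dy r q) :=
      Filter.eventuallyEq_of_mem (hUn p hp) fun q hq => hmx q hq
    have h1 : DifferentiableAt ℝ (fun q => (h12 r ω q - κ) • Dx r q) p :=
      ((hdh12 p hp).sub_const κ).smul (hdDxr p hp)
    have h2 : DifferentiableAt ℝ (fun q => h11 r ω q • Dy r q) p :=
      (hdh11 p hp).smul (hdDyr p hp)
    rw [he.fderiv_eq, fderiv_fun_sub h1 h2]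
    simp only [ContinuousLinearMap.sub_apply, sub_dotProduct]
    rw [fderiv_smul_dot ((hdh12 p hp).sub_const κ) (hdDxr p hp) (hnx p hp),
      fderiv_smul_dot (hdh11 p hp) (hdDyr p hp) (hny p hp)]
  have key2 : ∀ p ∈ U, ∀ w : ℝ × ℝ, fderiv ℝ (Dy m) p w ⬝ᵥ nvec r ω p =
      h22 r ω p * (fderiv ℝ (Dx r) p w ⬝ᵥ nvec r ω p)
      + (κ - h12 r ω p) * (fderiv ℝ (Dy r) p w ⬝ᵥ nvec r ω p) := by
    intro p hp w
    have he : Dy m =ᶠ[nhds p]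
        (fun q => h22 r ω q • Dx r q + (κ - h12 r ω q) • Dy r q) :=
      Filter.eventuallyEq_of_mem (hUn p hp) fun q hq => hmy q hq
    have h1 : DifferentiableAt ℝ (fun q => h22 r ω q • Dx r q) p :=
      (hdh22 p hp).smul (hdDxr p hp)
    have h2 : DifferentiableAt ℝ (fun q => (κ - h12 r ω q) • Dy r q) p :=
      ((hdh12 p hp).const_sub κ).smul (hdDyr p hp)
    rw [he.fderiv_eq, fderiv_fun_add h1 h2]
    simp only [ContinuousLinearMap.add_apply, add_dotProduct]
    rw [fderiv_smul_dot (hdh22 p hp) (hdDxr p hp) (hnx p hp),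
      fderiv_smul_dot ((hdh12 p hp).const_sub κ) (hdDyr p hp) (hny p hp)]
  -- second derivatives of rminus dotted with n
  have hsecx : ∀ p ∈ U, ∀ w : ℝ × ℝ, fderiv ℝ (Dx (rminus r m κ)) p w ⬝ᵥ nvec r ω p =
      fderiv ℝ (Dx r) p w ⬝ᵥ nvec r ω p - κ⁻¹ * (fderiv ℝ (Dx m) p w ⬝ᵥ nvec r ω p) := by
    intro p hp w
    have he : Dx (rminus r m κ) =ᶠ[nhds p] fun q => Dx r q - κ⁻¹ • Dx m q :=
      Filter.eventuallyEq_of_mem (hUn p hp) fun q hq => hdrm1 q hq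
    rw [he.fderiv_eq, fderiv_fun_sub (g := fun q => κ⁻¹ • Dx m q) (hdDxr p hp) ((hdDxm p hp).const_smul κ⁻¹),
      fderiv_fun_const_smul (hdDxm p hp)]
    simp [sub_dotProduct, smul_dotProduct, smul_eq_mul]
  have hsecy : ∀ p ∈ U, ∀ w : ℝ × ℝ, fderiv ℝ (Dy (rminus r m κ)) p w ⬝ᵥ nvec r ω p =
      fderiv ℝ (Dy r) p w ⬝ᵥ nvec r ω p - κ⁻¹ * (fderiv ℝ (Dy m) p w ⬝ᵥ nvec r ω p) := by
    intro p hp w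
    have he : Dy (rminus r m κ) =ᶠ[nhds p] fun q => Dy r q - κ⁻¹ • Dy m q :=
      Filter.eventuallyEq_of_mem (hUn p hp) fun q hq => hdrm2 q hq
    rw [he.fderiv_eq, fderiv_fun_sub (g := fun q => κ⁻¹ • Dy m q) (hdDyr p hp) ((hdDym p hp).const_smul κ⁻¹),
      fderiv_fun_const_smul (hdDym p hp)]
    simp [sub_dotProduct, smul_dotProduct, smul_eq_mul]
  -- the three second-fundamental-form identities for rminus
  have main : ∀ p ∈ U,
      Dx (Dx (rminus r m κ)) p ⬝ᵥ nvec r ω p = 2 * h11 r ω p * Real.sin (ω p)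
      ∧ Dy (Dx (rminus r m κ)) p ⬝ᵥ nvec r ω p = h12 r ω p * Real.sin (ω p)
      ∧ Dy (Dy (rminus r m κ)) p ⬝ᵥ nvec r ω p = 0 := by
    intro p hp
    have hmix : Dx (Dy r) p ⬝ᵥ nvec r ω p = h12 r ω p * Real.sin (ω p) := by
      rw [symm_mixed hU hr hp, hXY p hp]
    refine ⟨?_, ?_, ?_⟩
    · have e1 : Dx (Dx (rminus r m κ)) p ⬝ᵥ nvec r ω p =
          Dx (Dx r) p ⬝ᵥ nvec r ω p - κ⁻¹ * (Dx (Dx m) p ⬝ᵥ nvec r ω p) :=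
        hsecx p hp (1, 0)
      have e2 : Dx (Dx m) p ⬝ᵥ nvec r ω p =
          (h12 r ω p - κ) * (Dx (Dx r) p ⬝ᵥ nvec r ω p)
          - h11 r ω p * (Dx (Dy r) p ⬝ᵥ nvec r ω p) := key1 p hp (1, 0)
      rw [e1, e2, hXX p hp, hmix]
      field_simp
      ring
    · have e1 : Dy (Dx (rminus r m κ)) p ⬝ᵥ nvec r ω p =
          Dy (Dx r) p ⬝ᵥ nvec r ω p - κ⁻¹ * (Dy (Dx m) p ⬝ᵥ nvec r ω p) :=
        hsecx p hp (0, 1)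
      have e2 : Dy (Dx m) p ⬝ᵥ nvec r ω p =
          (h12 r ω p - κ) * (Dy (Dx r) p ⬝ᵥ nvec r ω p)
          - h11 r ω p * (Dy (Dy r) p ⬝ᵥ nvec r ω p) := key1 p hp (0, 1)
      rw [e1, e2, hXY p hp, hYY p hp]
      have hc := hconc p hp
      have hk : κ * κ⁻¹ = 1 := mul_inv_cancel₀ hκ
      linear_combination (κ⁻¹ * Real.sin (ω p)) * hc
        + (Real.sin (ω p) * (h12 r ω p * κ - κ * κ - h11 r ω p * h22 r ω p + h12 r ω p ^ 2
            - κ * h12 r ω p) * 0) * hk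
    · have e1 : Dy (Dy (rminus r m κ)) p ⬝ᵥ nvec r ω p =
          Dy (Dy r) p ⬝ᵥ nvec r ω p - κ⁻¹ * (Dy (Dy m) p ⬝ᵥ nvec r ω p) :=
        hsecy p hp (0, 1)
      have e2 : Dy (Dy m) p ⬝ᵥ nvec r ω p =
          h22 r ω p * (Dy (Dx r) p ⬝ᵥ nvec r ω p)
          + (κ - h12 r ω p) * (Dy (Dy r) p ⬝ᵥ nvec r ω p) := key2 p hp (0, 1)
      rw [e1, e2, hXY p hp, hYY p hp]
      field_simp
      ring
  refine ⟨main, ?_⟩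
  -- Gauss curvature computation
  intro p hp h12ne
  obtain ⟨m1, m2, m3⟩ := main p hp
  rw [m1, m2, m3]
  -- first fundamental form of rminus
  have dotlin : ∀ a b c d : ℝ,
      (a • Dx r p + b • Dy r p) ⬝ᵥ (c • Dx r p + d • Dy r p)
        = a * c + b * d + (a * d + b * c) * Real.cos (ω p) := by
    intro a b c d
    simp only [add_dotProduct, dotProduct_add, smul_dotProduct,
      dotProduct_smul, smul_eq_mul, hxx p hp, hyy p hp, hxy p hp,
      dotProduct_comm (Dy r p) (Dx r p)]
    ring
  have ex : Dx (rminus r m κ) p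
      = (1 - κ⁻¹ * (h12 r ω p - κ)) • Dx r p + (κ⁻¹ * h11 r ω p) • Dy r p := by
    rw [hdrm1 p hp, hmx p hp]
    module
  have ey : Dy (rminus r m κ) p
      = (-(κ⁻¹ * h22 r ω p)) • Dx r p + (1 - κ⁻¹ * (κ - h12 r ω p)) • Dy r p := by
    rw [hdrm2 p hp, hmy p hp]
    module
  set A := 1 - κ⁻¹ * (h12 r ω p - κ) with hA
  set B := κ⁻¹ * h11 r ω p with hB
  set C := -(κ⁻¹ * h22 r ω p) with hC
  set D := 1 - κ⁻¹ * (κ - h12 r ω p) with hD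
  have hE : Dx (rminus r m κ) p ⬝ᵥ Dx (rminus r m κ) p
      = A * A + B * B + (A * B + B * A) * Real.cos (ω p) := by rw [ex]; exact dotlin A B A B
  have hG : Dy (rminus r m κ) p ⬝ᵥ Dy (rminus r m κ) p
      = C * C + D * D + (C * D + D * C) * Real.cos (ω p) := by rw [ey]; exact dotlin C D C D
  have hF : Dx (rminus r m κ) p ⬝ᵥ Dy (rminus r m κ) p
      = A * C + B * D + (A * D + B * C) * Real.cos (ω p) := by
    rw [ex, ey]; exact dotlin A B C D
  rw [hE, hG, hF]
  have hADBC : A * D - B * C = κ⁻¹ * h12 r ω p := by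
    have hc := hconc p hp
    have hk : κ * κ⁻¹ = 1 := mul_inv_cancel₀ hκ
    simp only [hA, hB, hC, hD]
    linear_combination (κ⁻¹ ^ 2) * hc + (κ⁻¹ * h12 r ω p - κ⁻¹ * κ - 1) * hk
  have hden : (A * A + B * B + (A * B + B * A) * Real.cos (ω p))
        * (C * C + D * D + (C * D + D * C) * Real.cos (ω p))
      - (A * C + B * D + (A * D + B * C) * Real.cos (ω p)) ^ 2
      = (κ⁻¹ * h12 r ω p) ^ 2 * Real.sin (ω p) ^ 2 := by
    have h1 : (A * A + B * B + (A * B + B * A) * Real.cos (ω p))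
          * (C * C + D * D + (C * D + D * C) * Real.cos (ω p))
        - (A * C + B * D + (A * D + B * C) * Real.cos (ω p)) ^ 2
        = (A * D - B * C) ^ 2 * (1 - Real.cos (ω p) ^ 2) := by ring
    rw [h1, hADBC, ← hs2 p hp]
  rw [hden]
  have hsne' : Real.sin (ω p) ≠ 0 := (hsin p hp).ne'
  field_simp
  ring
end

section
/- (Gauss curvature of the middle surface of two equally curved pseudospherical surfaces.) Let I₁₁, I₁₂, I₂₂, II₁₁, κ, ξ be real numbers with Δ := I₁₁I₂₂ − I₁₂² > 0, II₁₁ ≠ 0, ξ ≠ 0 and 1 + ξ ≠ 0. Define Ī₁₁ := ((1+ξ)²/4)·I₁₁, Ī₁₂ := ((1+ξ)²/(4ξ))·I₁₂, Ī₂₂ := ((1+ξ)²/(4ξ²))·I₂₂, ĪI₁₁ := ((1+ξ)/2)·II₁₁, ĪI₁₂ := 0, and ĪI₂₂ := −((1+ξ)/(2ξ))·κ²Δ/II₁₁. Then Ī₁₁Ī₂₂ − Ī₁₂² = ((1+ξ)⁴/(16ξ²))·Δ > 0 and (ĪI₁₁ĪI₂₂ − ĪI₁₂²)/(Ī₁₁Ī₂₂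 − Ī₁₂²) = −4κ²ξ/(1+ξ)². -/
/-!
Since `r̄_p = a r_p` and `r̄_q = b r_q` with `a = (1+ξ)/2`, `b = (1+ξ)/(2ξ)`, the first fundamental
form of the middle surface is that of `r` scaled by `diag(a, b)` on both sides, and, in the
conjugate net, its second fundamental form is scaled by `a` and `b` once. Hence
`det Ī = (ab)² Δ`, `det ĪI = ab · det II`, and the Gauss curvature becomes `K / (ab)`
with `K = −κ²` and `ab = (1+ξ)²/(4ξ)`.
-/

lemma det_symm_diag_scale (a b E F G : ℝ) :
    a ^ 2 * E * (b ^ 2 * G) - (a * b * F) ^ 2 = (a * b) ^ 2 * (E * G - F ^ 2) := by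
  ring

lemma mul_div_sq_mul (c x y : ℝ) : c * x / (c ^ 2 * y) = x / y / c := by
  rcases eq_or_ne c 0 with rfl | hc
  · simp
  · field_simp

/-- **Gauss curvature of the middle surface of two equally curved pseudospherical
surfaces.** With `Ī`, `ĪI` as induced from Peterson coordinates, one has
`det Ī = ((1+ξ)⁴/(16ξ²))Δ > 0` and `det ĪI / det Ī = −4κ²ξ/(1+ξ)²`. -/
theorem middle_surface_gauss_curvature
    (I₁₁ I₁₂ I₂₂ II₁₁ κ ξ : ℝ)
    (Δ : ℝ) (hΔdef : Δ = I₁₁ * I₂₂ - I₁₂ ^ 2) (hΔ : 0 < Δ)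
    (hII : II₁₁ ≠ 0) (hξ : ξ ≠ 0) (hξ1 : 1 + ξ ≠ 0)
    (Ib₁₁ Ib₁₂ Ib₂₂ IIb₁₁ IIb₁₂ IIb₂₂ : ℝ)
    (hIb11 : Ib₁₁ = (1 + ξ) ^ 2 / 4 * I₁₁)
    (hIb12 : Ib₁₂ = (1 + ξ) ^ 2 / (4 * ξ) * I₁₂)
    (hIb22 : Ib₂₂ = (1 + ξ) ^ 2 / (4 * ξ ^ 2) * I₂₂)
    (hIIb11 : IIb₁₁ = (1 + ξ) / 2 * II₁₁)
    (hIIb12 : IIb₁₂ = 0)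
    (hIIb22 : IIb₂₂ = -((1 + ξ) / (2 * ξ)) * κ ^ 2 * Δ / II₁₁) :
    (Ib₁₁ * Ib₂₂ - Ib₁₂ ^ 2 = (1 + ξ) ^ 4 / (16 * ξ ^ 2) * Δ
      ∧ 0 < Ib₁₁ * Ib₂₂ - Ib₁₂ ^ 2)
    ∧ (IIb₁₁ * IIb₂₂ - IIb₁₂ ^ 2) / (Ib₁₁ * Ib₂₂ - Ib₁₂ ^ 2)
        = -4 * κ ^ 2 * ξ / (1 + ξ) ^ 2 := by
  set a := (1 + ξ) / 2
  set b := (1 + ξ) / (2 * ξ)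
  have hab : a * b = (1 + ξ) ^ 2 / (4 * ξ) := by ring
  have hdetI : Ib₁₁ * Ib₂₂ - Ib₁₂ ^ 2 = (a * b) ^ 2 * Δ := by
    rw [hIb11, hIb12, hIb22, hΔdef, ← det_symm_diag_scale]
    ring
  have hdetII : IIb₁₁ * IIb₂₂ - IIb₁₂ ^ 2 = a * b * (-κ ^ 2 * Δ) := by
    rw [hIIb11, hIIb12, hIIb22]
    field_simp
    ring
  refine ⟨⟨by rw [hdetI, hab]; ring, by rw [hdetI, hab]; positivity⟩, ?_⟩
  rw [hdetI, hdetII, mul_div_sq_mul, neg_mul, neg_div, mul_div_cancel_right₀ _ hΔ.ne', hab]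
  field_simp
end

section
/- (Concordance of the induced net on the middle surface: algebraic form.) Let I₁₁, I₁₂, I₂₂, II₁₁, κ, ξ be real numbers with Δ := I₁₁I₂₂ − I₁₂² > 0, II₁₁ ≠ 0, κ ≠ 0, ξ ≠ 0 and 1 + ξ ≠ 0, and let ε₁ = 1, ε₂ = −1. Define the matrices Ī = [[((1+ξ)²/4)I₁₁, ((1+ξ)²/(4ξ))I₁₂],[((1+ξ)²/(4ξ))I₁₂, ((1+ξ)²/(4ξ²))I₂₂]] and ĪI = [[((1+ξ)/2)II₁₁, 0],[0, −((1+ξ)/(2ξ))κ²Δ/II₁₁]], the vectors Xᵢ := (1, ζᵢ) with ζᵢ := εᵢ ξ^{i−1} II₁₁/(κ√Δ) (i = 1,2), and Ĩᵢⱼ := Xᵢᵀ Ī Xⱼ, ĨIᵢⱼ := Xᵢᵀ ĪI Xⱼ. Then: (a) Ĩ₁₁Ĩ₂₂ − Ĩ₁₂² = ((1+ξ)⁶/(16κ²ξ²))·II₁₁² > 0; (b) ĨI₁₂ = (1+ξ)·II₁₁; (c) ĨI₁₂²/(Ĩ₁₁Ĩ₂₂ − Ĩ₁₂²) = 16κ²ξ²/(1+ξ)⁴;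 and (d) (ĨI₁₁ĨI₂₂ − ĨI₁₂²)² = κ² · ĨI₁₂² · (Ĩ₁₁Ĩ₂₂ − Ĩ₁₂²), i.e. the Gauss curvature K̃ = det ĨI/det Ĩ and the Schief curvature squared σ̃² = ĨI₁₂²/det Ĩ of the net (X₁, X₂) satisfy K̃² = κ²σ̃². -/
open Matrix

/-!
The Gram determinant of two vectors `u, v` with respect to a symmetric `2 × 2` form `A` is
`det A · (u ∧ v)²`. For `Ī`, `ĪI` and the directions `X₁, X₂`, whose wedge is
`ζ₂ - ζ₁ = -(1 + ξ) II₁₁ / (κ√Δ)`, this gives `det Ĩ` and `det ĨI` in closed form, while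
`ĨI₁₂ = (1 + ξ) II₁₁` because `ζ₁ ζ₂ = -ξ II₁₁² / (κ²Δ)` makes the two diagonal terms of `ĪI`
contribute equally. The concordance `K̃² = κ² σ̃²` is then an identity between these values.
-/

namespace Matrix

theorem isSymm_of_fin_two {α : Type*} (a b d : α) : (!![a, b; b, d]).IsSymm :=
  IsSymm.ext_iff.2 fun i j => by fin_cases i <;> fin_cases j <;> rfl

theorem IsSymm.dotProduct_mulVec_det_fin_two {R : Type*} [CommRing R]
    {A : Matrix (Fin 2) (Fin 2) R} (hA : A.IsSymm) (u v : Fin 2 → R) :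
    (u ⬝ᵥ A *ᵥ u) * (v ⬝ᵥ A *ᵥ v) - (u ⬝ᵥ A *ᵥ v) ^ 2
      = A.det * (u 0 * v 1 - u 1 * v 0) ^ 2 := by
  simp only [mulVec, dotProduct, Fin.sum_univ_two, det_fin_two, hA.apply 0 1]
  ring

theorem dotProduct_mulVec_diag_fin_two {R : Type*} [CommRing R] (p q : R)
    (u v : Fin 2 → R) :
    u ⬝ᵥ !![p, 0; 0, q] *ᵥ v = p * u 0 * v 0 + q * u 1 * v 1 := by
  simp only [dotProduct, mulVec, of_apply, cons_val', cons_val_fin_one, Fin.sum_univ_two,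
    cons_val_zero, cons_val_one, zero_mul, add_zero, zero_add]
  ring

end Matrix

theorem det_middle_first_form (ξ I₁₁ I₁₂ I₂₂ : ℝ) :
    det !![(1 + ξ) ^ 2 / 4 * I₁₁, (1 + ξ) ^ 2 / (4 * ξ) * I₁₂;
           (1 + ξ) ^ 2 / (4 * ξ) * I₁₂, (1 + ξ) ^ 2 / (4 * ξ ^ 2) * I₂₂]
      = (1 + ξ) ^ 4 / (16 * ξ ^ 2) * (I₁₁ * I₂₂ - I₁₂ ^ 2) := by
  rw [det_fin_two_of]; ring

theorem det_middle_second_form (ξ II₁₁ κ Δ : ℝ) (hII : II₁₁ ≠ 0) :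
    det !![(1 + ξ) / 2 * II₁₁, 0; 0, -((1 + ξ) / (2 * ξ)) * κ ^ 2 * Δ / II₁₁]
      = -((1 + ξ) ^ 2 * κ ^ 2 * Δ / (4 * ξ)) := by
  rw [det_fin_two_of]; field_simp; ring

section AsymptoticSlopes

variable {II₁₁ κ ξ Δ : ℝ}

theorem sq_sub_asymptotic_slopes (hκ : κ ≠ 0) (hΔ : 0 < Δ) :
    (-(ξ * II₁₁ / (κ * Real.sqrt Δ)) - II₁₁ / (κ * Real.sqrt Δ)) ^ 2
      = (1 + ξ) ^ 2 * II₁₁ ^ 2 / (κ ^ 2 * Δ) := by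
  have hsqrt : Real.sqrt Δ ≠ 0 := (Real.sqrt_pos.2 hΔ).ne'
  field_simp
  rw [Real.sq_sqrt hΔ.le]
  ring

theorem mul_asymptotic_slopes (hκ : κ ≠ 0) (hΔ : 0 < Δ) :
    II₁₁ / (κ * Real.sqrt Δ) * -(ξ * II₁₁ / (κ * Real.sqrt Δ))
      = -(ξ * II₁₁ ^ 2 / (κ ^ 2 * Δ)) := by
  have hsqrt : Real.sqrt Δ ≠ 0 := (Real.sqrt_pos.2 hΔ).ne'
  field_simp
  rw [Real.sq_sqrt hΔ.le]
  ring

end AsymptoticSlopes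

/-- **Concordance of the induced net on the middle surface: algebraic form.**
With `ε₁ = 1`, `ε₂ = −1`, `X₁ = (1, ζ₁)`, `X₂ = (1, ζ₂)`,
`ζᵢ = εᵢ ξ^{i−1} II₁₁/(κ√Δ)`, and `Ĩᵢⱼ = Xᵢᵀ Ī Xⱼ`, `ĨIᵢⱼ = Xᵢᵀ ĪI Xⱼ`, the net
satisfies `det Ĩ > 0`, `ĨI₁₂ = (1+ξ)·II₁₁`, `ĨI₁₂²/det Ĩ = 16κ²ξ²/(1+ξ)⁴` and
`(det ĨI)² = κ²·ĨI₁₂²·det Ĩ`, i.e. `K̃² = κ²σ̃²`. -/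
theorem induced_net_concordance_algebraic
    (I₁₁ I₁₂ I₂₂ II₁₁ κ ξ : ℝ)
    (Δ : ℝ) (hΔdef : Δ = I₁₁ * I₂₂ - I₁₂ ^ 2) (hΔ : 0 < Δ)
    (hII : II₁₁ ≠ 0) (hκ : κ ≠ 0) (hξ : ξ ≠ 0) (hξ1 : 1 + ξ ≠ 0)
    (Ib IIb : Matrix (Fin 2) (Fin 2) ℝ)
    (hIb : Ib = !![(1 + ξ) ^ 2 / 4 * I₁₁, (1 + ξ) ^ 2 / (4 * ξ) * I₁₂;
                   (1 + ξ) ^ 2 / (4 * ξ) * I₁₂, (1 + ξ) ^ 2 / (4 * ξ ^ 2) * I₂₂])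
    (hIIb : IIb = !![(1 + ξ) / 2 * II₁₁, 0;
                     0, -((1 + ξ) / (2 * ξ)) * κ ^ 2 * Δ / II₁₁])
    (ζ₁ ζ₂ : ℝ)
    (hζ₁ : ζ₁ = II₁₁ / (κ * Real.sqrt Δ))
    (hζ₂ : ζ₂ = -(ξ * II₁₁ / (κ * Real.sqrt Δ)))
    (X₁ X₂ : Fin 2 → ℝ) (hX₁ : X₁ = ![1, ζ₁]) (hX₂ : X₂ = ![1, ζ₂])
    (tI tII : Fin 2 → Fin 2 → ℝ)
    (htI : ∀ i j : Fin 2, tI i j = ![X₁, X₂] i ⬝ᵥ (Ib *ᵥ ![X₁, X₂] j))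
    (htII : ∀ i j : Fin 2, tII i j = ![X₁, X₂] i ⬝ᵥ (IIb *ᵥ ![X₁, X₂] j)) :
    (tI 0 0 * tI 1 1 - (tI 0 1) ^ 2
        = (1 + ξ) ^ 6 / (16 * κ ^ 2 * ξ ^ 2) * II₁₁ ^ 2
      ∧ 0 < tI 0 0 * tI 1 1 - (tI 0 1) ^ 2)
    ∧ tII 0 1 = (1 + ξ) * II₁₁
    ∧ (tII 0 1) ^ 2 / (tI 0 0 * tI 1 1 - (tI 0 1) ^ 2)
        = 16 * κ ^ 2 * ξ ^ 2 / (1 + ξ) ^ 4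
    ∧ (tII 0 0 * tII 1 1 - (tII 0 1) ^ 2) ^ 2
        = κ ^ 2 * (tII 0 1) ^ 2 * (tI 0 0 * tI 1 1 - (tI 0 1) ^ 2) := by
  have hwedge : (X₁ 0 * X₂ 1 - X₁ 1 * X₂ 0) ^ 2 = (1 + ξ) ^ 2 * II₁₁ ^ 2 / (κ ^ 2 * Δ) := by
    simpa [hX₁, hX₂, hζ₁, hζ₂] using sq_sub_asymptotic_slopes (II₁₁ := II₁₁) (ξ := ξ) hκ hΔ
  have hdetI : tI 0 0 * tI 1 1 - tI 0 1 ^ 2 = (1 + ξ) ^ 6 / (16 * κ ^ 2 * ξ ^ 2) * II₁₁ ^ 2 := by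
    simp only [htI, cons_val_zero, cons_val_one]
    rw [hIb, (isSymm_of_fin_two _ _ _).dotProduct_mulVec_det_fin_two, det_middle_first_form,
      ← hΔdef, hwedge]
    field_simp
  have hII₁₂ : tII 0 1 = (1 + ξ) * II₁₁ := by
    simp only [htII, cons_val_zero, cons_val_one]
    rw [hIIb, dotProduct_mulVec_diag_fin_two, hX₁, hX₂]
    simp only [cons_val_zero, cons_val_one]
    rw [mul_one, mul_assoc _ ζ₁, hζ₁, hζ₂, mul_asymptotic_slopes hκ hΔ]
    field_simp
    ring
  have hdetII : tII 0 0 * tII 1 1 - tII 0 1 ^ 2 = -((1 + ξ) ^ 4 * II₁₁ ^ 2 / (4 * ξ)) := by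
    simp only [htII, cons_val_zero, cons_val_one]
    rw [hIIb, (isSymm_of_fin_two _ _ _).dotProduct_mulVec_det_fin_two,
      det_middle_second_form _ _ _ _ hII, hwedge]
    field_simp
  refine ⟨⟨hdetI, hdetI ▸ by positivity⟩, hII₁₂, ?_, ?_⟩
  · rw [hdetI, hII₁₂]; field_simp
  · rw [hdetII, hdetI, hII₁₂]; field_simp; ring
end
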